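/- arXiv:1411.5872 — 6 statements merged into one kernel-verified Lean document; each statement's English description precedes it below -/
import Mathlib

section
/- Let a < b be real numbers and let q ∈ C²(ℝ) with q(x) > 0 for all x ∈ ℝ. Then μ₁((a,b); q) = λ₁((a,b); q⁻¹), i.e. the first nontrivial Neumann eigenvalue with weight q equals the first Dirichlet eigenvalue with weight 1/q. -/
open MeasureTheory Set

/-- The first nontrivial Neumann eigenvalue of `-(u' q)' = μ u q` on `(a,b)`,
defined variationally as the infimum of the Rayleigh quotient over smooth
trial functions with weighted mean zero. -/
noncomputable def neumannMu1 (q : ℝ → ℝ) (a b : ℝ) : ℝ :=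
  sInf { μ : ℝ | ∃ u : ℝ → ℝ, ContDiff ℝ 1 u ∧
    0 < (∫ x in a..b, (u x) ^ 2 * q x) ∧
    (∫ x in a..b, u x * q x) = 0 ∧
    μ = (∫ x in a..b, (deriv u x) ^ 2 * q x) / ∫ x in a..b, (u x) ^ 2 * q x }

/-- The first Dirichlet eigenvalue of `-(v'/q)' = λ v/q` on `(a,b)`, defined
variationally as the infimum of the Rayleigh quotient with weight `1/q` over
smooth trial functions vanishing at the endpoints. -/
noncomputable def dirichletLambda1 (q : ℝ → ℝ) (a b : ℝ) : ℝ :=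
  sInf { lam : ℝ | ∃ v : ℝ → ℝ, ContDiff ℝ 1 v ∧ v a = 0 ∧ v b = 0 ∧
    0 < (∫ x in a..b, (v x) ^ 2 / q x) ∧
    lam = (∫ x in a..b, (deriv v x) ^ 2 / q x) / ∫ x in a..b, (v x) ^ 2 / q x }

/-!
The two variational problems are exchanged by integration. If `u` has weighted mean zero, then
`v = ∫ₐˣ u q` vanishes at both endpoints, and if `v` vanishes at both endpoints, then
`u = c - ∫ₐˣ v / q` (with `c` fixed by the mean condition) satisfies `u' = -v / q`. In either
direction the numerator of the new Rayleigh quotient is the denominator of the old one, and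
integration by parts followed by the weighted Cauchy–Schwarz inequality
`(∫ F G)² ≤ (∫ F² q) (∫ G² / q)` shows that the new quotient is at most the old one.
So every quotient of each problem is bounded below by a quotient of the other, and the two
infima coincide.
-/

lemma Continuous.contDiff_one_integral {f : ℝ → ℝ} (hf : Continuous f) (a : ℝ) :
    ContDiff ℝ 1 (fun x => ∫ t in a..x, f t) :=
  contDiff_one_iff_deriv.2
    ⟨fun x => (hf.integral_hasStrictDerivAt a x).hasDerivAt.differentiableAt,
      by simpa only [funext (Continuous.deriv_integral f hf a)] using hf⟩

lemma sq_integral_mul_le_weighted {q F G : ℝ → ℝ} {a b : ℝ} (hab : a ≤ b)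
    (hq : Continuous q) (hqpos : ∀ x, 0 < q x) (hF : Continuous F) (hG : Continuous G) :
    (∫ x in a..b, F x * G x) ^ 2 ≤
      (∫ x in a..b, F x ^ 2 * q x) * ∫ x in a..b, G x ^ 2 / q x := by
  have hq0 : ∀ x, q x ≠ 0 := fun x => (hqpos x).ne'
  have hGq : Continuous fun x => G x ^ 2 / q x := (hG.pow 2).div hq hq0
  -- `(t F q + G)² / q ≥ 0` expands to a quadratic polynomial in `t`
  have hquad : ∀ t : ℝ, 0 ≤ (∫ x in a..b, F x ^ 2 * q x) * (t * t) +
      2 * (∫ x in a..b, F x * G x) * t + ∫ x in a..b, G x ^ 2 / q x := by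
    intro t
    have hexpand : ∀ x, (t * F x * q x + G x) ^ 2 / q x =
        t * t * (F x ^ 2 * q x) + 2 * t * (F x * G x) + G x ^ 2 / q x := fun x => by
      field_simp [hq0 x]
      ring
    have hnonneg : 0 ≤ ∫ x in a..b, (t * F x * q x + G x) ^ 2 / q x :=
      intervalIntegral.integral_nonneg hab fun x _ => div_nonneg (sq_nonneg _) (hqpos x).le
    simp only [hexpand] at hnonneg
    rw [intervalIntegral.integral_add, intervalIntegral.integral_add,
      intervalIntegral.integral_const_mul, intervalIntegral.integral_const_mul] at hnonneg
    · linarith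
    all_goals first
      | exact hGq.intervalIntegrable _ _
      | (apply Continuous.intervalIntegrable; fun_prop)
  have hdiscrim := discrim_le_zero hquad
  rw [discrim] at hdiscrim
  linarith

/-- `N' / D'` is the old Rayleigh quotient, `D' / D` the new one, and `h` comes from
Cauchy–Schwarz. -/
lemma div_le_div_of_sq_le_mul {D D' N' : ℝ} (hD' : 0 < D') (hN' : 0 ≤ N')
    (h : D' ^ 2 ≤ D * N') : 0 < D ∧ D' / D ≤ N' / D' := by
  have hD : 0 < D := pos_of_mul_pos_left (lt_of_lt_of_le (by positivity) h) hN'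
  refine ⟨hD, ?_⟩
  rw [div_le_div_iff₀ hD hD']
  nlinarith

section Transfer

variable {q : ℝ → ℝ} {a b : ℝ}

lemma exists_dirichlet_quotient_le_neumann (hab : a ≤ b) (hq : Continuous q)
    (hqpos : ∀ x, 0 < q x) {u : ℝ → ℝ} (hu : ContDiff ℝ 1 u)
    (hDu : 0 < ∫ x in a..b, u x ^ 2 * q x) (hmean : ∫ x in a..b, u x * q x = 0) :
    ∃ v : ℝ → ℝ, ContDiff ℝ 1 v ∧ v a = 0 ∧ v b = 0 ∧
      0 < (∫ x in a..b, v x ^ 2 / q x) ∧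
      (∫ x in a..b, deriv v x ^ 2 / q x) / (∫ x in a..b, v x ^ 2 / q x) ≤
        (∫ x in a..b, deriv u x ^ 2 * q x) / ∫ x in a..b, u x ^ 2 * q x := by
  have huq : Continuous fun x => u x * q x := hu.continuous.mul hq
  set v : ℝ → ℝ := fun x => ∫ t in a..x, u t * q t
  have hv : ContDiff ℝ 1 v := huq.contDiff_one_integral a
  have hva : v a = 0 := intervalIntegral.integral_same
  have hNv : ∫ x in a..b, deriv v x ^ 2 / q x = ∫ x in a..b, u x ^ 2 * q x := by
    refine intervalIntegral.integral_congr fun x _ => ?_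
    simp only [v, Continuous.deriv_integral _ huq a x]
    field_simp [(hqpos x).ne']
  have hparts : ∫ x in a..b, deriv u x * v x = -∫ x in a..b, u x ^ 2 * q x := by
    have h := intervalIntegral.integral_mul_deriv_eq_deriv_mul (a := a) (b := b) (v := v)
      (fun x _ => (hu.differentiable one_ne_zero x).hasDerivAt)
      (fun x _ => (huq.integral_hasStrictDerivAt a x).hasDerivAt)
      (hu.continuous_deriv_one.intervalIntegrable _ _) (huq.intervalIntegrable _ _)
    simp only [hva, show v b = 0 from hmean, ← mul_assoc, ← sq, mul_zero, sub_zero,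
      zero_sub] at h
    linarith
  have hCS := sq_integral_mul_le_weighted hab hq hqpos hu.continuous_deriv_one hv.continuous
  rw [hparts, neg_sq, mul_comm] at hCS
  obtain ⟨hDv, hle⟩ := div_le_div_of_sq_le_mul hDu
    (intervalIntegral.integral_nonneg hab fun x _ => by have := hqpos x; positivity) hCS
  exact ⟨v, hv, hva, hmean, hDv, hNv ▸ hle⟩

lemma exists_neumann_quotient_le_dirichlet (hab : a < b) (hq : Continuous q)
    (hqpos : ∀ x, 0 < q x) {v : ℝ → ℝ} (hv : ContDiff ℝ 1 v) (hva : v a = 0) (hvb : v b = 0)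
    (hDv : 0 < ∫ x in a..b, v x ^ 2 / q x) :
    ∃ u : ℝ → ℝ, ContDiff ℝ 1 u ∧
      0 < (∫ x in a..b, u x ^ 2 * q x) ∧
      (∫ x in a..b, u x * q x) = 0 ∧
      (∫ x in a..b, deriv u x ^ 2 * q x) / (∫ x in a..b, u x ^ 2 * q x) ≤
        (∫ x in a..b, deriv v x ^ 2 / q x) / ∫ x in a..b, v x ^ 2 / q x := by
  have hvq : Continuous fun x => v x / q x := hv.continuous.div hq fun x => (hqpos x).ne'
  set w : ℝ → ℝ := fun x => ∫ t in a..x, v t / q t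
  have hw : ContDiff ℝ 1 w := hvq.contDiff_one_integral a
  set c : ℝ := (∫ x in a..b, w x * q x) / ∫ x in a..b, q x
  set u : ℝ → ℝ := fun x => c - w x
  have hu : ContDiff ℝ 1 u := contDiff_const.sub hw
  have hu' : ∀ x, HasDerivAt u (-(v x / q x)) x := fun x =>
    (hvq.integral_hasStrictDerivAt a x).hasDerivAt.const_sub c
  have hmean : ∫ x in a..b, u x * q x = 0 := by
    have hQ : 0 < ∫ x in a..b, q x :=
      intervalIntegral.intervalIntegral_pos_of_pos_on (hq.intervalIntegrable _ _)
        (fun x _ => hqpos x) hab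
    simp only [u, sub_mul]
    rw [intervalIntegral.integral_sub (f := fun x => c * q x) (g := fun x => w x * q x)
        ((continuous_const.mul hq).intervalIntegrable _ _)
        ((hw.continuous.mul hq).intervalIntegrable _ _),
      intervalIntegral.integral_const_mul, div_mul_cancel₀ _ hQ.ne', sub_self]
  have hNu : ∫ x in a..b, deriv u x ^ 2 * q x = ∫ x in a..b, v x ^ 2 / q x := by
    refine intervalIntegral.integral_congr fun x _ => ?_
    simp only [(hu' x).deriv]
    field_simp [(hqpos x).ne']
  have hparts : ∫ x in a..b, u x * deriv v x = ∫ x in a..b, v x ^ 2 / q x := by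
    rw [intervalIntegral.integral_mul_deriv_eq_deriv_mul (fun x _ => hu' x)
      (fun x _ => (hv.differentiable one_ne_zero x).hasDerivAt)
      (hvq.neg.intervalIntegrable _ _) (hv.continuous_deriv_one.intervalIntegrable _ _),
      hva, hvb]
    simp only [mul_zero, sub_zero, zero_sub, neg_mul, intervalIntegral.integral_neg, neg_neg,
      div_mul_eq_mul_div, sq]
  have hCS := sq_integral_mul_le_weighted hab.le hq hqpos hu.continuous hv.continuous_deriv_one
  rw [hparts] at hCS
  obtain ⟨hDu, hle⟩ := div_le_div_of_sq_le_mul hDv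
    (intervalIntegral.integral_nonneg hab.le fun x _ => by have := hqpos x; positivity) hCS
  exact ⟨u, hu, hDu, hmean, hNu ▸ hle⟩

end Transfer

/-- Lemma 3.1 (isospectrality): for a positive `C²` weight `q`, the first
nontrivial Neumann eigenvalue with weight `q` on `(a,b)` equals the first
Dirichlet eigenvalue with weight `1/q` on `(a,b)`. -/
theorem stmt_6 (a b : ℝ) (hab : a < b) (q : ℝ → ℝ) (hq : ContDiff ℝ 2 q)
    (hqpos : ∀ x, 0 < q x) :
    neumannMu1 q a b = dirichletLambda1 q a b := by
  refine csInf_eq_csInf_of_forall_exists_le ?_ ?_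
  · rintro _ ⟨u, hu, hDu, hmean, rfl⟩
    obtain ⟨v, hv, hva, hvb, hDv, hle⟩ :=
      exists_dirichlet_quotient_le_neumann hab.le hq.continuous hqpos hu hDu hmean
    exact ⟨_, ⟨v, hv, hva, hvb, hDv, rfl⟩, hle⟩
  · rintro _ ⟨v, hv, hva, hvb, hDv, rfl⟩
    obtain ⟨u, hu, hDu, hmean, hle⟩ :=
      exists_neumann_quotient_le_dirichlet hab hq.continuous hqpos hv hva hvb hDv
    exact ⟨_, ⟨u, hu, hDu, hmean, rfl⟩, hle⟩
end

section
/- Let a < b be real numbers, q ∈ C²(ℝ) with q > 0, μ ∈ ℝ, and let u ∈ C³([a,b]) satisfy −(u'(x) q(x))' = μ u(x) q(x) for all x ∈ (a,b) together with u'(a) = u'(b) = 0. Then the function v := u' q satisfies −(v'(x)/q(x))' = μ v(x)/q(x) for all x ∈ (a,b) and v(a) = v(b) = 0; that is, v is a solution of the Dirichlet problem with weight 1/q and the same eigenvalue μ. -/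
/- Dividing the Neumann equation by `q` gives `(u' q)'/q = -μ u` on the open interval, so
differentiating once more yields `((u' q)'/q)' = -μ u' = -μ (u' q)/q`; the boundary values
of `u' q` vanish because those of `u'` do. -/

lemma deriv_div_eq_neg_const_mul_deriv_of_eqOn {U : Set ℝ} (hU : IsOpen U) {μ x : ℝ}
    {q u w : ℝ → ℝ} (hq : ∀ s ∈ U, q s ≠ 0) (hw : ∀ s ∈ U, w s = -(μ * u s * q s))
    (hx : x ∈ U) (hu : DifferentiableAt ℝ u x) :
    deriv (fun s => w s / q s) x = -(μ * deriv u x) := by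
  have h_eventually : (fun s => w s / q s) =ᶠ[nhds x] fun s => -(μ * u s) := by
    filter_upwards [hU.mem_nhds hx] with s hs
    rw [hw s hs]
    field_simp [hq s hs]
  rw [h_eventually.deriv_eq, deriv.fun_neg, deriv_const_mul _ hu]

theorem stmt_7_general (a b : ℝ) (q : ℝ → ℝ)
    (hqpos : ∀ x, 0 < q x) (μ : ℝ) (u : ℝ → ℝ)
    (hu : ContDiffOn ℝ 3 u (Set.Icc a b))
    (hode : ∀ x ∈ Set.Ioo a b, deriv (fun s => deriv u s * q s) x = -(μ * u x * q x))
    (hua : deriv u a = 0) (hub : deriv u b = 0) :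
    (∀ x ∈ Set.Ioo a b,
      deriv (fun s => (deriv (fun t => deriv u t * q t) s) / q s) x =
        -(μ * (deriv u x * q x) / q x)) ∧
    deriv u a * q a = 0 ∧ deriv u b * q b = 0 := by
  refine ⟨fun x hx => ?_, by rw [hua, zero_mul], by rw [hub, zero_mul]⟩
  have hu_diff : DifferentiableAt ℝ u x :=
    (hu.contDiffAt (Icc_mem_nhds hx.1 hx.2)).differentiableAt (by norm_num)
  rw [deriv_div_eq_neg_const_mul_deriv_of_eqOn isOpen_Ioo (fun s _ => (hqpos s).ne') hode hx
    hu_diff, mul_div_assoc, mul_div_cancel_right₀ _ (hqpos x).ne']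

/-- Lemma 3.1, first part: if `u ∈ C³([a,b])` solves the weighted Neumann problem
`-(u' q)' = μ u q` in `(a,b)` with `u'(a) = u'(b) = 0`, then `v := u' q` solves the
weighted Dirichlet problem `-(v'/q)' = μ v/q` in `(a,b)` with `v(a) = v(b) = 0`. -/
theorem stmt_7 (a b : ℝ) (hab : a < b) (q : ℝ → ℝ) (hq : ContDiff ℝ 2 q)
    (hqpos : ∀ x, 0 < q x) (μ : ℝ) (u : ℝ → ℝ)
    (hu : ContDiffOn ℝ 3 u (Set.Icc a b))
    (hode : ∀ x ∈ Set.Ioo a b, deriv (fun s => deriv u s * q s) x = -(μ * u x * q x))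
    (hua : deriv u a = 0) (hub : deriv u b = 0) :
    (∀ x ∈ Set.Ioo a b,
      deriv (fun s => (deriv (fun t => deriv u t * q t) s) / q s) x =
        -(μ * (deriv u x * q x) / q x)) ∧
    deriv u a * q a = 0 ∧ deriv u b * q b = 0 :=
  stmt_7_general a b q hqpos μ u hu hode hua hub
end

section
/- Let α < β be real numbers, let m : ℝ → ℝ be continuous and positive, and let ε > 0. Suppose k₁ : (−ε, ε) → ℝ and w̃ : ℝ × (−ε, ε) → ℝ are such that w̃ is twice continuously differentiable in (y,t), k₁ is differentiable at t = 0, and for every t ∈ (−ε, ε): −∂²_y w̃(y,t) = k₁(t) m(y) w̃(y,t) for all y ∈ (α+t, β+t), w̃(α+t, t) = w̃(β+t, t) = 0, and ∫_{α+t}^{β+t} w̃(y,t)² m(y) dy = 1. Then k₁'(0) = (∂_y w̃(α, 0))² − (∂_y w̃(β, 0))². -/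
/-!
For small `t > 0` put `u = W(·,0)` and `v = W(·,t)`; both solve their equations on `(α+t, β)`,
so the Wronskian `u'v - uv'` has derivative `(k₁ t - k₁ 0) m u v` there. Integrating, and using
`u β = 0 = v (α+t)`,
`(k₁ t - k₁ 0) ∫_{α+t}^β m u v = u'(β) W(β,t) + W(α+t,0) ∂_y W(α+t,t)`.
Divide by `t` and let `t → 0⁺`: the integral tends to the normalisation `1`,
`W(α+t,0)/t → ∂_y W(α,0)`, and since `W(β+t,t) ≡ 0`, `W(β,t)/t → -∂_y W(β,0)`.
-/

open MeasureTheory Set Filter Topology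

theorem HasDerivAt.tendsto_div_nhdsGT_zero {f : ℝ → ℝ} {f' : ℝ} (hf : HasDerivAt f f' 0)
    (h0 : f 0 = 0) : Tendsto (fun t => f t / t) (𝓝[>] 0) (𝓝 f') := by
  simpa [h0, div_eq_inv_mul] using hf.tendsto_slope_zero_right

theorem ContDiffOn.contDiff_comp_prodMk_left {𝕜 E F G : Type*} [NontriviallyNormedField 𝕜]
    [NormedAddCommGroup E] [NormedSpace 𝕜 E] [NormedAddCommGroup F] [NormedSpace 𝕜 F]
    [NormedAddCommGroup G] [NormedSpace 𝕜 G] {n : WithTop ℕ∞} {f : E × F → G} {s : Set F}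
    (hf : ContDiffOn 𝕜 n f (univ ×ˢ s)) {t : F} (ht : t ∈ s) :
    ContDiff 𝕜 n (fun x => f (x, t)) :=
  contDiffOn_univ.mp <| hf.comp (contDiff_id.prodMk contDiff_const).contDiffOn
    fun x _ => ⟨mem_univ x, ht⟩

section PartialDerivatives

variable {F : Type*} [NormedAddCommGroup F] [NormedSpace ℝ F] {f : ℝ × ℝ → F}

theorem HasFDerivAt.hasDerivAt_comp_prodMk_left {f' : ℝ × ℝ →L[ℝ] F} {x t : ℝ}
    (hf : HasFDerivAt f f' (x, t)) : HasDerivAt (fun s => f (s, t)) (f' (1, 0)) x :=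
  hf.comp_hasDerivAt x ((hasDerivAt_id x).prodMk (hasDerivAt_const x t))

theorem ContDiffOn.continuousOn_deriv_comp_prodMk_left {n : WithTop ℕ∞} {U : Set (ℝ × ℝ)}
    (hf : ContDiffOn ℝ n f U) (hn : 1 ≤ n) (hU : IsOpen U) :
    ContinuousOn (fun p : ℝ × ℝ => deriv (fun s => f (s, p.2)) p.1) U := by
  refine ((hf.continuousOn_fderiv_of_isOpen hU hn).clm_apply
    (continuousOn_const (c := ((1 : ℝ), (0 : ℝ))))).congr fun p hp => ?_
  have hdiff := (hf.contDiffAt (hU.mem_nhds hp)).differentiableAt (zero_lt_one.trans_le hn).ne'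
  exact hdiff.hasFDerivAt.hasDerivAt_comp_prodMk_left.deriv

theorem DifferentiableAt.hasDerivAt_comp_prodMk_right_of_eventually_zero {x : ℝ}
    (hf : DifferentiableAt ℝ f (x, 0)) (hzero : ∀ᶠ t in 𝓝 0, f (x + t, t) = 0) :
    HasDerivAt (fun t => f (x, t)) (-deriv (fun s => f (s, 0)) x) 0 := by
  set f' := fderiv ℝ f (x, 0)
  have hdiag : HasDerivAt (fun t => f (x + t, t)) (f' (1, 1)) 0 := by
    have hf₀ : HasFDerivAt f f' (x + 0, 0) := by rw [add_zero]; exact hf.hasFDerivAt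
    exact hf₀.comp_hasDerivAt (f := fun t : ℝ => (x + t, t)) 0
      (((hasDerivAt_id 0).const_add x).prodMk (hasDerivAt_id 0))
  have hdiag_zero : f' (1, 1) = 0 :=
    hdiag.unique ((hasDerivAt_const 0 0).congr_of_eventuallyEq hzero)
  have hsplit : f' (0, 1) = f' (1, 1) - f' (1, 0) := by
    rw [← map_sub, Prod.mk_sub_mk, sub_self, sub_zero]
  rw [hf.hasFDerivAt.hasDerivAt_comp_prodMk_left.deriv, ← zero_sub, ← hdiag_zero, ← hsplit]
  exact hf.hasFDerivAt.comp_hasDerivAt 0 ((hasDerivAt_const 0 x).prodMk (hasDerivAt_id 0))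

end PartialDerivatives

theorem continuousAt_parametric_intervalIntegral_of_continuousOn {E : Type*}
    [NormedAddCommGroup E] [NormedSpace ℝ E] {f : ℝ → ℝ → E} {U : Set ℝ} {x₀ a₀ : ℝ}
    (hf : ContinuousOn (Function.uncurry f) (U ×ˢ univ)) (hU : U ∈ 𝓝 x₀) {s : ℝ → ℝ}
    (hs : Continuous s) :
    ContinuousAt (fun x => ∫ t in a₀..s x, f x t) x₀ := by
  obtain ⟨δ, hδ, hδU⟩ := Metric.nhds_basis_closedBall.mem_iff.mp hU
  rw [Real.closedBall_eq_Icc] at hδU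
  have hle : x₀ - δ ≤ x₀ + δ := by linarith
  -- Clamping the parameter into `[x₀ - δ, x₀ + δ] ⊆ U` makes the integrand continuous
  -- everywhere without changing it near `x₀`.
  set c : ℝ → ℝ := fun x => projIcc (x₀ - δ) (x₀ + δ) hle x
  have hc : Continuous c := continuous_subtype_val.comp continuous_projIcc
  have hfc : Continuous fun p : ℝ × ℝ => f (c p.1) p.2 :=
    hf.comp_continuous ((hc.comp continuous_fst).prodMk continuous_snd)
      fun p => ⟨hδU (projIcc (x₀ - δ) (x₀ + δ) hle p.1).2, mem_univ _⟩
  have hcont := (intervalIntegral.continuous_parametric_intervalIntegral_of_continuous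
    (f := fun x t => f (c x) t) (μ := volume) (a₀ := a₀) hfc hs).continuousAt (x := x₀)
  have hIcc : Icc (x₀ - δ) (x₀ + δ) ∈ 𝓝 x₀ := Icc_mem_nhds (by linarith) (by linarith)
  refine hcont.congr (eventuallyEq_of_mem hIcc fun x hx => ?_)
  simp only [c, projIcc_of_mem hle hx]

theorem sub_mul_integral_eq_wronskian_sub {u v m : ℝ → ℝ} {a b x y : ℝ} (hxy : x ≤ y)
    (hu : ContDiff ℝ 2 u) (hv : ContDiff ℝ 2 v) (hm : Continuous m)
    (hu'' : ∀ z ∈ Ioo x y, deriv (deriv u) z = -(a * m z * u z))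
    (hv'' : ∀ z ∈ Ioo x y, deriv (deriv v) z = -(b * m z * v z)) :
    (b - a) * ∫ z in x..y, m z * u z * v z =
      (deriv u y * v y - u y * deriv v y) - (deriv u x * v x - u x * deriv v x) := by
  have hu' : ContDiff ℝ 1 (deriv u) := hu.deriv' (n := 1)
  have hv' : ContDiff ℝ 1 (deriv v) := hv.deriv' (n := 1)
  have hderiv : ∀ z ∈ Ioo x y, HasDerivAt (fun z => deriv u z * v z - u z * deriv v z)
      ((b - a) * (m z * u z * v z)) z := by
    intro z hz
    have h := ((hu'.differentiable one_ne_zero z).hasDerivAt.mul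
      (hv.differentiable two_ne_zero z).hasDerivAt).sub
      ((hu.differentiable two_ne_zero z).hasDerivAt.mul
        (hv'.differentiable one_ne_zero z).hasDerivAt)
    rw [hu'' z hz, hv'' z hz] at h
    exact h.congr_deriv (by ring)
  rw [← intervalIntegral.integral_const_mul]
  refine intervalIntegral.integral_eq_sub_of_hasDerivAt_of_le hxy ?_ hderiv ?_
  · exact ((hu'.continuous.mul hv.continuous).sub (hu.continuous.mul hv'.continuous)).continuousOn
  · exact (continuous_const.mul ((hm.mul hu.continuous).mul hv.continuous)).intervalIntegrable _ _

section TranslatedFamily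

variable {α β ε : ℝ} {m : ℝ → ℝ} {W : ℝ × ℝ → ℝ}

theorem translated_green_identity {k : ℝ → ℝ} (hm : Continuous m)
    (hW : ∀ t ∈ Ioo (-ε) ε, ContDiff ℝ 2 (fun s => W (s, t)))
    (hode : ∀ t ∈ Ioo (-ε) ε, ∀ y ∈ Ioo (α + t) (β + t),
      deriv (deriv (fun s => W (s, t))) y = -(k t * m y * W (y, t)))
    (hbc : ∀ t ∈ Ioo (-ε) ε, W (α + t, t) = 0 ∧ W (β + t, t) = 0)
    {t : ℝ} (ht : t ∈ Ioo 0 ε) (htβ : α + t ≤ β) :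
    (k t - k 0) * ∫ y in (α + t)..β, m y * W (y, 0) * W (y, t) =
      deriv (fun s => W (s, 0)) β * W (β, t)
        + W (α + t, 0) * deriv (fun s => W (s, t)) (α + t) := by
  have h0 : (0 : ℝ) ∈ Ioo (-ε) ε := ⟨neg_lt_zero.mpr (ht.1.trans ht.2), ht.1.trans ht.2⟩
  have htε : t ∈ Ioo (-ε) ε := ⟨by linarith [ht.1, ht.2], ht.2⟩
  have hβ : W (β, 0) = 0 := by simpa using (hbc 0 h0).2
  rw [sub_mul_integral_eq_wronskian_sub htβ (hW 0 h0) (hW t htε) hm, hβ, (hbc t htε).1]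
  · ring
  · intro y hy
    exact hode 0 h0 y ⟨by linarith [hy.1, ht.1], by linarith [hy.2]⟩
  · intro y hy
    exact hode t htε y ⟨hy.1, by linarith [hy.2, ht.1]⟩

theorem tendsto_integral_mul_translated (hm : Continuous m)
    (hW : ContinuousOn W (univ ×ˢ Ioo (-ε) ε)) (hε : 0 < ε) :
    Tendsto (fun t => ∫ y in (α + t)..β, m y * W (y, 0) * W (y, t)) (𝓝 0)
      (𝓝 (∫ y in α..β, W (y, 0) ^ 2 * m y)) := by
  have h0 : (0 : ℝ) ∈ Ioo (-ε) ε := ⟨neg_lt_zero.mpr hε, hε⟩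
  have hcont : ContinuousOn (Function.uncurry fun t y => m y * W (y, 0) * W (y, t))
      (Ioo (-ε) ε ×ˢ univ) := by
    refine ((hm.comp continuous_snd).mul ?_).continuousOn.mul ?_
    · exact hW.comp_continuous (continuous_snd.prodMk continuous_const) fun p => ⟨trivial, h0⟩
    · exact hW.comp (continuous_snd.prodMk continuous_fst).continuousOn fun p hp => ⟨trivial, hp.1⟩
  have h := (continuousAt_parametric_intervalIntegral_of_continuousOn (a₀ := β) hcont
    (Ioo_mem_nhds h0.1 h0.2) (continuous_const_add α)).neg.tendsto
  have hsymm : (fun t => ∫ y in (α + t)..β, m y * W (y, 0) * W (y, t))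
      = -fun t => ∫ y in β..(α + t), m y * W (y, 0) * W (y, t) :=
    funext fun t => intervalIntegral.integral_symm _ _
  have hval : ∫ y in α..β, W (y, 0) ^ 2 * m y
      = -∫ y in β..(α + 0), m y * W (y, 0) * W (y, 0) := by
    rw [add_zero, ← intervalIntegral.integral_symm]
    exact intervalIntegral.integral_congr fun y _ => by ring
  rwa [hsymm, hval]

theorem tendsto_translated_boundary_terms_div (hε : 0 < ε)
    (hW : ContDiffOn ℝ 2 W (univ ×ˢ Ioo (-ε) ε))
    (hbc : ∀ t ∈ Ioo (-ε) ε, W (α + t, t) = 0 ∧ W (β + t, t) = 0) :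
    Tendsto (fun t => deriv (fun s => W (s, 0)) β * (W (β, t) / t)
        + W (α + t, 0) / t * deriv (fun s => W (s, t)) (α + t)) (𝓝[>] 0)
      (𝓝 (deriv (fun s => W (s, 0)) α ^ 2 - deriv (fun s => W (s, 0)) β ^ 2)) := by
  set A := deriv (fun s => W (s, 0)) α
  set B := deriv (fun s => W (s, 0)) β
  have h0 : (0 : ℝ) ∈ Ioo (-ε) ε := ⟨neg_lt_zero.mpr hε, hε⟩
  have hU : IsOpen (univ ×ˢ Ioo (-ε) ε : Set (ℝ × ℝ)) := isOpen_univ.prod isOpen_Ioo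
  have hWβ : Tendsto (fun t => W (β, t) / t) (𝓝[>] 0) (𝓝 (-B)) := by
    have hdiff := (hW.differentiableOn two_ne_zero).differentiableAt
      (hU.mem_nhds (x := (β, 0)) ⟨trivial, h0⟩)
    have hzero : ∀ᶠ t in 𝓝 0, W (β + t, t) = 0 :=
      eventually_of_mem (Ioo_mem_nhds h0.1 h0.2) fun t ht => (hbc t ht).2
    exact (hdiff.hasDerivAt_comp_prodMk_right_of_eventually_zero hzero).tendsto_div_nhdsGT_zero
      (by simpa using (hbc 0 h0).2)
  have hWα : Tendsto (fun t => W (α + t, 0) / t) (𝓝[>] 0) (𝓝 A) := by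
    have hA : HasDerivAt (fun s => W (s, 0)) A (α + 0) := by
      rw [add_zero]
      exact ((hW.contDiff_comp_prodMk_left h0).differentiable two_ne_zero α).hasDerivAt
    exact (hA.comp_const_add α 0).tendsto_div_nhdsGT_zero (by simpa using (hbc 0 h0).1)
  have hD : Tendsto (fun t => deriv (fun s => W (s, t)) (α + t)) (𝓝[>] 0) (𝓝 A) := by
    have hcont := (hW.continuousOn_deriv_comp_prodMk_left one_le_two hU).continuousAt
      (x := (α, 0)) (hU.mem_nhds ⟨trivial, h0⟩)
    have hcurve : Tendsto (fun t : ℝ => (α + t, t)) (𝓝 0) (𝓝 (α, 0)) := by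
      simpa using ((continuous_const_add α).prodMk continuous_id).tendsto 0
    exact (hcont.tendsto.comp hcurve).mono_left nhdsWithin_le_nhds
  convert (tendsto_const_nhds.mul hWβ).add (hWα.mul hD) using 2
  ring

end TranslatedFamily

theorem stmt_12_general (α β : ℝ) (hab : α < β) (m : ℝ → ℝ) (hm : Continuous m)
    (ε : ℝ) (hε : 0 < ε)
    (k₁ : ℝ → ℝ) (W : ℝ × ℝ → ℝ)
    (hW : ContDiffOn ℝ 2 W (Set.univ ×ˢ Set.Ioo (-ε) ε))
    (hk : DifferentiableAt ℝ k₁ 0)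
    (hode : ∀ t ∈ Set.Ioo (-ε) ε, ∀ y ∈ Set.Ioo (α + t) (β + t),
      deriv (deriv (fun s => W (s, t))) y = -(k₁ t * m y * W (y, t)))
    (hbc : ∀ t ∈ Set.Ioo (-ε) ε, W (α + t, t) = 0 ∧ W (β + t, t) = 0)
    (hnorm : ∀ t ∈ Set.Ioo (-ε) ε,
      (∫ y in (α + t)..(β + t), (W (y, t)) ^ 2 * m y) = 1) :
    deriv k₁ 0 = (deriv (fun s => W (s, 0)) α) ^ 2 - (deriv (fun s => W (s, 0)) β) ^ 2 := by
  have h0 : (0 : ℝ) ∈ Ioo (-ε) ε := ⟨neg_lt_zero.mpr hε, hε⟩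
  have hk' : Tendsto (fun t => (k₁ t - k₁ 0) / t) (𝓝[>] 0) (𝓝 (deriv k₁ 0)) :=
    (hk.hasDerivAt.sub_const _).tendsto_div_nhdsGT_zero (sub_self _)
  have hI : Tendsto (fun t => ∫ y in (α + t)..β, m y * W (y, 0) * W (y, t)) (𝓝[>] 0) (𝓝 1) := by
    have hnorm₀ : ∫ y in α..β, W (y, 0) ^ 2 * m y = 1 := by simpa using hnorm 0 h0
    rw [← hnorm₀]
    exact (tendsto_integral_mul_translated hm hW.continuousOn hε).mono_left nhdsWithin_le_nhds
  have hgreen : ∀ᶠ t in 𝓝[>] 0, (k₁ t - k₁ 0) / t * ∫ y in (α + t)..β, m y * W (y, 0) * W (y, t)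
      = deriv (fun s => W (s, 0)) β * (W (β, t) / t)
        + W (α + t, 0) / t * deriv (fun s => W (s, t)) (α + t) := by
    filter_upwards [Ioo_mem_nhdsGT (lt_min hε (sub_pos.mpr hab))] with t ht
    rw [div_mul_eq_mul_div, translated_green_identity hm
      (fun t ht => hW.contDiff_comp_prodMk_left ht) hode hbc
      ⟨ht.1, ht.2.trans_le (min_le_left _ _)⟩ (by linarith [ht.2.trans_le (min_le_right _ _)])]
    ring
  simpa using tendsto_nhds_unique ((hk'.mul hI).congr' hgreen)
    (tendsto_translated_boundary_terms_div hε hW hbc)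

/-- Lemma 3.3 (shape derivative formula): let `W(y,t)` be a normalized solution of
the translated Dirichlet eigenvalue problem `-∂²_y W = k₁(t) m W` in `(α+t, β+t)`
with `W(α+t,t) = W(β+t,t) = 0` and `∫_{α+t}^{β+t} W(y,t)² m(y) dy = 1` for every
`t ∈ (-ε,ε)`. If `W` is twice continuously differentiable in `(y,t)` and `k₁` is
differentiable at `0`, then `k₁'(0) = (∂_y W(α,0))² - (∂_y W(β,0))²`. -/
theorem stmt_12 (α β : ℝ) (hab : α < β) (m : ℝ → ℝ) (hm : Continuous m)
    (hmpos : ∀ y, 0 < m y) (ε : ℝ) (hε : 0 < ε)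
    (k₁ : ℝ → ℝ) (W : ℝ × ℝ → ℝ)
    (hW : ContDiffOn ℝ 2 W (Set.univ ×ˢ Set.Ioo (-ε) ε))
    (hk : DifferentiableAt ℝ k₁ 0)
    (hode : ∀ t ∈ Set.Ioo (-ε) ε, ∀ y ∈ Set.Ioo (α + t) (β + t),
      deriv (deriv (fun s => W (s, t))) y = -(k₁ t * m y * W (y, t)))
    (hbc : ∀ t ∈ Set.Ioo (-ε) ε, W (α + t, t) = 0 ∧ W (β + t, t) = 0)
    (hnorm : ∀ t ∈ Set.Ioo (-ε) ε,
      (∫ y in (α + t)..(β + t), (W (y, t)) ^ 2 * m y) = 1) :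
    deriv k₁ 0 = (deriv (fun s => W (s, 0)) α) ^ 2 - (deriv (fun s => W (s, 0)) β) ^ 2 :=
  stmt_12_general α β hab m hm ε hε k₁ W hW hk hode hbc hnorm
end

section
/- Let α < β be real numbers with α + β > 0, let m : ℝ → ℝ be a C¹, positive, even function with m'(y) ≥ 0 for all y > 0, and let ε > 0. Suppose k₁ : (−ε, ε) → ℝ and w̃ : ℝ × (−ε, ε) → ℝ are such that w̃ is twice continuously differentiable in (y,t), k₁ is differentiable at t = 0, and for every t ∈ (−ε, ε): −∂²_y w̃(y,t) = k₁(t) m(y) w̃(y,t) for all y ∈ (α+t, β+t), w̃(α+t, t) = w̃(β+t, t) = 0, w̃(y,t) > 0 for y ∈ (α+t, β+t), and ∫_{α+t}^{β+t} w̃(y,t)² m(y) dy = 1. Then k₁'(0) ≤ 0, and the inequality is strict unless m is constant on (α, β). -/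
/-!
Translating the eigenfunctions back, `v_t z = W (z + t, t)` solves `-v'' = k₁ t * m (z + t) * v`
on `(α, β)` with Dirichlet data, so Green's identity against `w = W (·, 0)` gives
`k₁ t * ∫ m (z + t) w v_t = k₁ 0 * ∫ m w v_t`. Differentiating at `t = 0` and using `∫ w² m = 1`
yields `k₁'(0) = -k₁(0) ∫ m' w²`, while `k₁(0) = ∫ w'² > 0`. As `m'` is odd and nonnegative on
`[0, ∞)`, the part of `∫ m' w²` over `(α, 0)` folds onto `(0, -α)`, where `w (-x) < w x`: the
Wronskian of `w` and `x ↦ w x - w (-x)` is constant, which forces the quotient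
`(w x - w (-x)) / w x` to increase from `0` to `1` on `[0, -α]`.
-/

open MeasureTheory Set intervalIntegral

section Slices

variable {F : ℝ × ℝ → ℝ} {s : Set ℝ} {n : WithTop ℕ∞}

theorem ContDiffOn.contDiff_slice (hF : ContDiffOn ℝ n F (univ ×ˢ s)) {t : ℝ} (ht : t ∈ s) :
    ContDiff ℝ n fun z => F (z, t) :=
  contDiffOn_univ.1 <| hF.comp (by fun_prop) fun z _ => ⟨mem_univ z, ht⟩

theorem ContDiffOn.shear (hF : ContDiffOn ℝ n F (univ ×ˢ s)) :
    ContDiffOn ℝ n (fun p : ℝ × ℝ => F (p.1 + p.2, p.2)) (univ ×ˢ s) :=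
  hF.comp (by fun_prop) fun p hp => ⟨mem_univ _, hp.2⟩

theorem ContDiffOn.hasDerivAt_slice_snd (hs : IsOpen s) (hF : ContDiffOn ℝ 1 F (univ ×ˢ s))
    (z : ℝ) {t : ℝ} (ht : t ∈ s) :
    HasDerivAt (fun t => F (z, t)) (fderiv ℝ F (z, t) (0, 1)) t :=
  ((hF.differentiableOn one_ne_zero).differentiableAt
    ((isOpen_univ.prod hs).mem_nhds ⟨mem_univ z, ht⟩)).hasFDerivAt.comp_hasDerivAt t
    ((hasDerivAt_const t z).prodMk (hasDerivAt_id t))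

theorem hasDerivAt_intervalIntegral_of_contDiffOn (hs : IsOpen s) {t₀ : ℝ} (ht₀ : t₀ ∈ s)
    (hF : ContDiffOn ℝ 1 F (univ ×ˢ s)) (a b : ℝ) :
    HasDerivAt (fun t => ∫ z in a..b, F (z, t))
      (∫ z in a..b, deriv (fun t => F (z, t)) t₀) t₀ := by
  have hF'c : ContinuousOn (fun p : ℝ × ℝ => fderiv ℝ F p (0, 1)) (univ ×ˢ s) :=
    (hF.continuousOn_fderiv_of_isOpen (isOpen_univ.prod hs) le_rfl).clm_apply continuousOn_const
  have hFc : ∀ t ∈ s, Continuous fun z => F (z, t) := fun t ht =>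
    (hF.contDiff_slice ht).continuous
  obtain ⟨δ, hδ, hδs⟩ := Metric.nhds_basis_closedBall.mem_iff.1 (hs.mem_nhds ht₀)
  obtain ⟨C, hC⟩ := (isCompact_uIcc.prod (isCompact_closedBall t₀ δ)).exists_bound_of_continuousOn
    (hF'c.mono (prod_mono (subset_univ _) hδs))
  have key := hasDerivAt_integral_of_dominated_loc_of_deriv_le (μ := volume) (a := a) (b := b)
    (F := fun t z => F (z, t)) (F' := fun t z => fderiv ℝ F (z, t) (0, 1)) (bound := fun _ => C)
    (Metric.ball_mem_nhds t₀ hδ)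
    (Filter.eventually_of_mem (hs.mem_nhds ht₀) fun t ht => (hFc t ht).aestronglyMeasurable)
    ((hFc t₀ ht₀).intervalIntegrable a b)
    ((hF'c.comp_continuous (by fun_prop) fun z => ⟨mem_univ z, ht₀⟩).aestronglyMeasurable)
    (Filter.Eventually.of_forall fun z hz t ht =>
      hC (z, t) ⟨uIoc_subset_uIcc hz, Metric.ball_subset_closedBall ht⟩)
    intervalIntegrable_const
    (Filter.Eventually.of_forall fun z _ t ht =>
      hF.hasDerivAt_slice_snd hs z (hδs (Metric.ball_subset_closedBall ht)))
  simpa only [fun z => (hF.hasDerivAt_slice_snd hs z ht₀).deriv] using key.2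

end Slices

section Dirichlet

variable {u v w p q : ℝ → ℝ} {a b : ℝ}

theorem integral_deriv_sq_eq_of_dirichlet (hab : a ≤ b) (hu : ContDiff ℝ 2 u) (hp : Continuous p)
    (hua : u a = 0) (hub : u b = 0) (hu'' : ∀ x ∈ Ioo a b, deriv (deriv u) x = -(p x * u x)) :
    ∫ x in a..b, deriv u x ^ 2 = ∫ x in a..b, p x * u x ^ 2 := by
  have hu' : ContDiff ℝ 1 (deriv u) := hu.deriv'
  have hu₀ := hu.continuous
  have hu₁ := hu'.continuous
  have hFTC : ∫ x in a..b, (deriv u x ^ 2 - p x * u x ^ 2) =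
      u b * deriv u b - u a * deriv u a := by
    refine integral_eq_sub_of_hasDerivAt_of_le (f := fun x => u x * deriv u x) hab
      (by fun_prop) (fun x hx => ?_) (Continuous.intervalIntegrable (by fun_prop) _ _)
    refine ((hu.differentiable two_ne_zero x).hasDerivAt.mul
      (hu'.differentiable one_ne_zero x).hasDerivAt).congr_deriv ?_
    rw [hu'' x hx]
    ring
  rwa [integral_sub (Continuous.intervalIntegrable (by fun_prop) _ _)
    (Continuous.intervalIntegrable (by fun_prop) _ _), hua, hub, zero_mul, zero_mul,
    sub_self, sub_eq_zero] at hFTC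

theorem integral_mul_mul_eq_of_dirichlet (hab : a ≤ b) (hu : ContDiff ℝ 2 u)
    (hv : ContDiff ℝ 2 v) (hp : Continuous p) (hq : Continuous q)
    (hua : u a = 0) (hub : u b = 0) (hva : v a = 0) (hvb : v b = 0)
    (hu'' : ∀ x ∈ Ioo a b, deriv (deriv u) x = -(p x * u x))
    (hv'' : ∀ x ∈ Ioo a b, deriv (deriv v) x = -(q x * v x)) :
    ∫ x in a..b, p x * u x * v x = ∫ x in a..b, q x * u x * v x := by
  have hu' : ContDiff ℝ 1 (deriv u) := hu.deriv'
  have hv' : ContDiff ℝ 1 (deriv v) := hv.deriv'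
  have hu₀ := hu.continuous
  have hv₀ := hv.continuous
  have hu₁ := hu'.continuous
  have hv₁ := hv'.continuous
  have hpuv : Continuous fun x => p x * u x * v x := by fun_prop
  have hquv : Continuous fun x => q x * u x * v x := by fun_prop
  have hFTC : ∫ x in a..b, (q x * u x * v x - p x * u x * v x) =
      (deriv u b * v b - u b * deriv v b) - (deriv u a * v a - u a * deriv v a) := by
    refine integral_eq_sub_of_hasDerivAt_of_le
      (f := fun x => deriv u x * v x - u x * deriv v x) hab (by fun_prop) (fun x hx => ?_)
      ((hquv.sub hpuv).intervalIntegrable _ _)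
    refine (((hu'.differentiable one_ne_zero x).hasDerivAt.mul
      (hv.differentiable two_ne_zero x).hasDerivAt).sub
      ((hu.differentiable two_ne_zero x).hasDerivAt.mul
        (hv'.differentiable one_ne_zero x).hasDerivAt)).congr_deriv ?_
    rw [hu'' x hx, hv'' x hx]
    ring
  rw [integral_sub (hquv.intervalIntegrable _ _) (hpuv.intervalIntegrable _ _), hua, hub, hva,
    hvb] at hFTC
  simp only [mul_zero, zero_mul, sub_self] at hFTC
  exact (sub_eq_zero.1 hFTC).symm

theorem integral_deriv_sq_pos {c : ℝ} (hu : ContDiff ℝ 1 u) (hua : u a = 0) (hc : c ∈ Ioc a b)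
    (huc : u c ≠ 0) : 0 < ∫ x in a..b, deriv u x ^ 2 := by
  obtain ⟨ξ, hξ, hslope⟩ := exists_deriv_eq_slope u hc.1 hu.continuous.continuousOn
    (hu.differentiable one_ne_zero).differentiableOn
  have hξ' : deriv u ξ ≠ 0 := by
    rw [hslope, hua, sub_zero]
    exact div_ne_zero huc (sub_ne_zero.2 hc.1.ne')
  exact integral_pos (hc.1.trans_le hc.2) ((hu.continuous_deriv le_rfl).pow 2).continuousOn
    (fun x _ => sq_nonneg _) ⟨ξ, ⟨hξ.1.le, hξ.2.le.trans hc.2⟩, by positivity⟩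

theorem eigenvalue_pos_of_dirichlet {m : ℝ → ℝ} {k c : ℝ} (hab : a ≤ b) (hu : ContDiff ℝ 2 u)
    (hm : Continuous m) (hua : u a = 0) (hub : u b = 0)
    (hu'' : ∀ x ∈ Ioo a b, deriv (deriv u) x = -(k * m x * u x))
    (hnorm : ∫ x in a..b, u x ^ 2 * m x = 1) (hc : c ∈ Ioo a b) (huc : u c ≠ 0) : 0 < k := by
  have henergy := integral_deriv_sq_eq_of_dirichlet (p := fun x => k * m x) hab hu
    (by fun_prop) hua hub hu''
  have hk : ∫ x in a..b, k * m x * u x ^ 2 = k := by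
    simp_rw [mul_assoc, intervalIntegral.integral_const_mul, mul_comm (m _), hnorm, mul_one]
  rw [← hk, ← henergy]
  exact integral_deriv_sq_pos (hu.of_le one_le_two) hua ⟨hc.1, hc.2.le⟩ huc

theorem wronskian_eq_of_ode (hu : ContDiff ℝ 2 u) (hw : ContDiff ℝ 2 w)
    (hu'' : ∀ x ∈ Ico a b, deriv (deriv u) x = -(p x * u x))
    (hw'' : ∀ x ∈ Ico a b, deriv (deriv w) x = -(p x * w x)) :
    ∀ x ∈ Icc a b, deriv u x * w x - u x * deriv w x = deriv u a * w a - u a * deriv w a := by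
  have hu' : ContDiff ℝ 1 (deriv u) := hu.deriv'
  have hw' : ContDiff ℝ 1 (deriv w) := hw.deriv'
  have hu₀ := hu.continuous
  have hw₀ := hw.continuous
  have hu₁ := hu'.continuous
  have hw₁ := hw'.continuous
  refine constant_of_has_deriv_right_zero (f := fun x => deriv u x * w x - u x * deriv w x)
    (by fun_prop) fun x hx => HasDerivAt.hasDerivWithinAt ?_
  refine (((hu'.differentiable one_ne_zero x).hasDerivAt.mul
    (hw.differentiable two_ne_zero x).hasDerivAt).sub
    ((hu.differentiable two_ne_zero x).hasDerivAt.mul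
      (hw'.differentiable one_ne_zero x).hasDerivAt)).congr_deriv ?_
  rw [hu'' x hx, hw'' x hx]
  ring

theorem pos_of_wronskian_eq_const {γ : ℝ} (hu : Differentiable ℝ u) (hw : Differentiable ℝ w)
    (hua : u a = 0) (hub : 0 < u b) (hwpos : ∀ x ∈ Icc a b, 0 < w x)
    (hW : ∀ x ∈ Icc a b, deriv u x * w x - u x * deriv w x = γ) :
    ∀ x ∈ Ioc a b, 0 < u x := by
  intro x hx
  have hab : a < b := hx.1.trans_le hx.2
  have hq : ∀ y ∈ Icc a b, HasDerivAt (fun y => u y / w y) (γ / w y ^ 2) y := fun y hy =>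
    ((hu y).hasDerivAt.div (hw y).hasDerivAt (hwpos y hy).ne').congr_deriv (by rw [hW y hy])
  have hqc : ContinuousOn (fun y => u y / w y) (Icc a b) := fun y hy =>
    (hq y hy).continuousAt.continuousWithinAt
  have hγ : 0 < γ := by
    obtain ⟨ξ, hξ, hslope⟩ := exists_hasDerivAt_eq_slope _ _ hab hqc
      fun y hy => hq y (Ioo_subset_Icc_self hy)
    have hslope_pos : 0 < γ / w ξ ^ 2 := by
      rw [hslope, hua, zero_div, sub_zero]
      exact div_pos (div_pos hub (hwpos b (right_mem_Icc.2 hab.le))) (sub_pos.2 hab)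
    exact (div_pos_iff_of_pos_right (pow_pos (hwpos ξ (Ioo_subset_Icc_self hξ)) 2)).1 hslope_pos
  have hmono : StrictMonoOn (fun y => u y / w y) (Icc a b) := by
    refine strictMonoOn_of_deriv_pos (convex_Icc a b) hqc fun y hy => ?_
    rw [interior_Icc] at hy
    rw [(hq y (Ioo_subset_Icc_self hy)).deriv]
    exact div_pos hγ (pow_pos (hwpos y (Ioo_subset_Icc_self hy)) 2)
  have hx0 := hmono (left_mem_Icc.2 hab.le) (Ioc_subset_Icc_self hx) hx.1
  simp only [hua, zero_div] at hx0
  exact (div_pos_iff_of_pos_right (hwpos x (Ioc_subset_Icc_self hx))).1 hx0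

theorem apply_neg_lt_apply_of_ode {c : ℝ} (hw : ContDiff ℝ 2 w) (hp : p.Even)
    (hwc : w (-c) = 0) (hpos : ∀ x ∈ Icc 0 c, 0 < w x)
    (hw'' : ∀ x ∈ Ioo (-c) c, deriv (deriv w) x = -(p x * w x)) :
    ∀ x ∈ Ioc 0 c, w (-x) < w x := by
  set u := fun x => w x - w (-x) with hu_def
  have hu : ContDiff ℝ 2 u := hw.sub (hw.comp contDiff_neg)
  have hw₀ : Differentiable ℝ w := hw.differentiable two_ne_zero
  have hw₁ : Differentiable ℝ (deriv w) := (hw.deriv' (n := 1)).differentiable one_ne_zero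
  have hu' : deriv u = fun x => deriv w x + deriv w (-x) := funext fun x => by
    rw [hu_def, deriv_fun_sub (hw₀ x) (by fun_prop), deriv_comp_neg, sub_neg_eq_add]
  have hu'' : ∀ x ∈ Ico 0 c, deriv (deriv u) x = -(p x * u x) := by
    intro x hx
    rw [hu', deriv_fun_add (hw₁ x) (by fun_prop), deriv_comp_neg,
      hw'' x ⟨by linarith [hx.1, hx.2], hx.2⟩,
      hw'' (-x) ⟨by linarith [hx.2], by linarith [hx.1, hx.2]⟩, hp, hu_def]
    ring
  intro x hx
  have hc : 0 < c := hx.1.trans_le hx.2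
  have key := pos_of_wronskian_eq_const (hu.differentiable two_ne_zero) hw₀ (by simp [u])
    (by simpa [u, hwc] using hpos c (right_mem_Icc.2 hc.le)) hpos
    (wronskian_eq_of_ode hu hw hu'' fun y hy => hw'' y ⟨by linarith [hy.1], hy.2⟩) x hx
  simpa [u] using key

end Dirichlet

theorem Function.Even.odd_deriv {m : ℝ → ℝ} (hm : m.Even) : (deriv m).Odd := fun y => by
  have h := deriv_comp_neg m (-y)
  rwa [neg_neg, show (fun x => m (-x)) = m from funext hm] at h

theorem exists_deriv_ne_zero_of_not_const {m : ℝ → ℝ} {α β : ℝ} (hm : Differentiable ℝ m)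
    (h : ¬ ∃ C, ∀ y ∈ Ioo α β, m y = C) : ∃ z ∈ Ioo α β, deriv m z ≠ 0 := by
  by_contra! hz
  exact h (isOpen_Ioo.exists_is_const_of_deriv_eq_zero isPreconnected_Ioo hm.differentiableOn hz)

section OddWeight

variable {φ f : ℝ → ℝ} {α β : ℝ}

theorem integral_odd_mul_eq (hφ : Continuous φ) (hf : Continuous f) (hodd : φ.Odd) :
    ∫ x in α..β, φ x * f x =
      (∫ x in 0..-α, φ x * (f x - f (-x))) + ∫ x in -α..β, φ x * f x := by
  have hint : ∀ a b : ℝ, IntervalIntegrable (fun x => φ x * f x) volume a b :=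
    fun a b => (hφ.mul hf).intervalIntegrable a b
  have hreflect : ∫ x in α..0, φ x * f x = ∫ x in 0..-α, -(φ x * f (-x)) := by
    simpa [hodd.eq] using (integral_comp_neg (a := 0) (b := -α) (fun x => φ x * f x)).symm
  rw [← integral_add_adjacent_intervals (hint α 0) (hint 0 β),
    ← integral_add_adjacent_intervals (hint 0 (-α)) (hint (-α) β), hreflect,
    ← add_assoc, ← integral_add (Continuous.intervalIntegrable (by fun_prop) _ _) (hint _ _)]
  congr 1
  refine integral_congr fun x _ => ?_
  ring

theorem integral_reflect_mul_nonneg {c : ℝ} (hc : 0 ≤ c) (hφ_nonneg : ∀ x, 0 ≤ x → 0 ≤ φ x)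
    (hrefl : ∀ x ∈ Ioc 0 c, f (-x) ≤ f x) : 0 ≤ ∫ x in 0..c, φ x * (f x - f (-x)) := by
  refine integral_nonneg hc fun x hx => mul_nonneg (hφ_nonneg x hx.1) (sub_nonneg.2 ?_)
  rcases hx.1.eq_or_lt with rfl | hx0
  · rw [neg_zero]
  · exact hrefl x ⟨hx0, hx.2⟩

theorem integral_odd_mul_nonneg (hab : α < β) (hsum : 0 < α + β) (hφ : Continuous φ)
    (hodd : φ.Odd) (hφ_nonneg : ∀ x, 0 ≤ x → 0 ≤ φ x) (hf : Continuous f)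
    (hf_nonneg : ∀ x ∈ Icc α β, 0 ≤ f x) (hrefl : ∀ x ∈ Ioc 0 (-α), f (-x) ≤ f x) :
    0 ≤ ∫ x in α..β, φ x * f x := by
  rcases le_or_gt 0 α with hα | hα
  · exact integral_nonneg hab.le fun x hx =>
      mul_nonneg (hφ_nonneg x (hα.trans hx.1)) (hf_nonneg x hx)
  · rw [integral_odd_mul_eq hφ hf hodd]
    exact add_nonneg (integral_reflect_mul_nonneg (by linarith) hφ_nonneg hrefl)
      (integral_nonneg (by linarith) fun x hx =>
        mul_nonneg (hφ_nonneg x (by linarith [hx.1])) (hf_nonneg x ⟨by linarith [hx.1], hx.2⟩))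

theorem integral_odd_mul_pos (hab : α < β) (hsum : 0 < α + β) (hφ : Continuous φ)
    (hodd : φ.Odd) (hφ_nonneg : ∀ x, 0 ≤ x → 0 ≤ φ x) (hf : Continuous f)
    (hf_nonneg : ∀ x ∈ Icc α β, 0 ≤ f x) (hf_pos : ∀ x ∈ Ioo α β, 0 < f x)
    (hrefl : ∀ x ∈ Ioc 0 (-α), f (-x) < f x) {z : ℝ} (hz : z ∈ Ioo α β) (hφz : φ z ≠ 0) :
    0 < ∫ x in α..β, φ x * f x := by
  have hφ_abs : φ |z| ≠ 0 := by
    rcases abs_choice z with h | h <;> rw [h]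
    · exact hφz
    · rwa [hodd.eq, neg_ne_zero]
  have hζ0 : 0 < |z| := abs_pos.2 fun h => hφz (h ▸ hodd.map_zero)
  have hφζ : 0 < φ |z| := (hφ_nonneg _ hζ0.le).lt_of_ne' hφ_abs
  have hζ : |z| ∈ Ioo α β := by
    refine ⟨?_, abs_lt.2 ⟨by linarith [hz.1], by linarith [hz.2]⟩⟩
    linarith [le_abs_self z, hz.1]
  have hpos_of_mem : ∀ {a b : ℝ}, a < b → |z| ∈ Icc a b → (∀ x ∈ Ioc a b, 0 ≤ φ x * f x) →
      0 < ∫ x in a..b, φ x * f x := fun hab' hζab hle =>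
    integral_pos hab' (hφ.mul hf).continuousOn hle ⟨|z|, hζab, mul_pos hφζ (hf_pos _ hζ)⟩
  rcases le_or_gt 0 α with hα | hα
  · exact hpos_of_mem hab ⟨hζ.1.le, hζ.2.le⟩ fun x hx =>
      mul_nonneg (hφ_nonneg x (hα.trans hx.1.le)) (hf_nonneg x ⟨hx.1.le, hx.2⟩)
  have hright : ∀ x ∈ Icc (-α) β, 0 ≤ φ x * f x := fun x hx =>
    mul_nonneg (hφ_nonneg x (by linarith [hx.1])) (hf_nonneg x ⟨by linarith [hx.1], hx.2⟩)
  rw [integral_odd_mul_eq hφ hf hodd]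
  rcases le_or_gt |z| (-α) with hζα | hζα
  · refine add_pos_of_pos_of_nonneg ?_ (integral_nonneg (by linarith) hright)
    exact integral_pos (by linarith) (by fun_prop)
      (fun x hx => mul_nonneg (hφ_nonneg x hx.1.le) (sub_nonneg.2 (hrefl x hx).le))
      ⟨|z|, ⟨hζ0.le, hζα⟩, mul_pos hφζ (sub_pos.2 (hrefl _ ⟨hζ0, hζα⟩))⟩
  · exact add_pos_of_nonneg_of_pos
      (integral_reflect_mul_nonneg (by linarith) hφ_nonneg fun x hx => (hrefl x hx).le)
      (hpos_of_mem (by linarith) ⟨hζα.le, hζ.2.le⟩ fun x hx =>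
        hright x (Ioc_subset_Icc_self hx))

end OddWeight

section Eigenvalue

variable {α β : ℝ} {s : Set ℝ} {m k : ℝ → ℝ} {W : ℝ × ℝ → ℝ}

theorem eigenvalue_mul_integral_shift_eq (hab : α ≤ β) (hm : Continuous m)
    (hW : ContDiffOn ℝ 2 W (univ ×ˢ s)) (h0 : (0 : ℝ) ∈ s)
    (hode : ∀ t ∈ s, ∀ y ∈ Ioo (α + t) (β + t),
      deriv (deriv (fun z => W (z, t))) y = -(k t * m y * W (y, t)))
    (hbc : ∀ t ∈ s, W (α + t, t) = 0 ∧ W (β + t, t) = 0) {t : ℝ} (ht : t ∈ s) :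
    k t * ∫ z in α..β, m (z + t) * (W (z, 0) * W (z + t, t)) =
      k 0 * ∫ z in α..β, m z * (W (z, 0) * W (z + t, t)) := by
  have hv : ContDiff ℝ 2 fun z => W (z + t, t) :=
    (hW.contDiff_slice ht).comp (contDiff_id.add contDiff_const)
  have hv'' : ∀ z ∈ Ioo α β,
      deriv (deriv fun z => W (z + t, t)) z = -(k t * m (z + t) * W (z + t, t)) := by
    intro z hz
    have hd : deriv (fun z => W (z + t, t)) = fun z => deriv (fun y => W (y, t)) (z + t) :=
      funext fun z => deriv_comp_add_const (fun y => W (y, t)) t z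
    rw [hd, deriv_comp_add_const (deriv fun y => W (y, t)) t z]
    exact hode t ht (z + t) ⟨by linarith [hz.1], by linarith [hz.2]⟩
  have hgreen := integral_mul_mul_eq_of_dirichlet (p := fun z => k 0 * m z)
    (q := fun z => k t * m (z + t)) hab (hW.contDiff_slice h0) hv (by fun_prop) (by fun_prop)
    (by simpa using (hbc 0 h0).1) (by simpa using (hbc 0 h0).2) (hbc t ht).1 (hbc t ht).2
    (fun z hz => by simpa using hode 0 h0 z (by simpa using hz)) hv''
  simp only [mul_assoc, intervalIntegral.integral_const_mul] at hgreen
  exact hgreen.symm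

theorem deriv_eigenvalue_eq (hab : α ≤ β) (hs : IsOpen s) (h0 : (0 : ℝ) ∈ s)
    (hm : ContDiff ℝ 1 m) (hW : ContDiffOn ℝ 2 W (univ ×ˢ s)) (hk : DifferentiableAt ℝ k 0)
    (hode : ∀ t ∈ s, ∀ y ∈ Ioo (α + t) (β + t),
      deriv (deriv (fun z => W (z, t))) y = -(k t * m y * W (y, t)))
    (hbc : ∀ t ∈ s, W (α + t, t) = 0 ∧ W (β + t, t) = 0)
    (hnorm : ∫ y in α..β, W (y, 0) ^ 2 * m y = 1) :
    deriv k 0 = -(k 0 * ∫ z in α..β, deriv m z * W (z, 0) ^ 2) := by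
  set A := fun t => ∫ z in α..β, m (z + t) * (W (z, 0) * W (z + t, t))
  set D := fun t => ∫ z in α..β, (m (z + t) - m z) * (W (z, 0) * W (z + t, t))
  have hW₁ : ContDiffOn ℝ 1 W (univ ×ˢ s) := hW.of_le one_le_two
  have hw : ContDiff ℝ 1 fun z => W (z, 0) := hW₁.contDiff_slice h0
  have hw' : ContDiffOn ℝ 1 (fun p : ℝ × ℝ => W (p.1, 0)) (univ ×ˢ s) :=
    (hw.comp contDiff_fst).contDiffOn
  have hshear := hW₁.shear
  have hm' : ContDiffOn ℝ 1 (fun p : ℝ × ℝ => m (p.1 + p.2)) (univ ×ˢ s) :=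
    (hm.comp (contDiff_fst.add contDiff_snd)).contDiffOn
  have hm'' : ContDiffOn ℝ 1 (fun p : ℝ × ℝ => m p.1) (univ ×ˢ s) :=
    (hm.comp contDiff_fst).contDiffOn
  obtain ⟨A', hA⟩ : ∃ A', HasDerivAt A A' 0 :=
    ⟨_, hasDerivAt_intervalIntegral_of_contDiffOn hs h0 (hm'.mul (hw'.mul hshear)) α β⟩
  have hD : HasDerivAt D (∫ z in α..β, deriv m z * W (z, 0) ^ 2) 0 := by
    convert hasDerivAt_intervalIntegral_of_contDiffOn hs h0
      ((hm'.sub hm'').mul (hw'.mul hshear)) α β using 1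
    -- the unknown `t`-derivative of `W (z + t, t)` is multiplied by `m (z + 0) - m z = 0`
    refine integral_congr fun z _ => Eq.symm (HasDerivAt.deriv ?_)
    have hmz : HasDerivAt (fun t => m (z + t) - m z) (deriv m z) 0 :=
      (HasDerivAt.comp_const_add z 0 (by
        rw [add_zero]; exact (hm.differentiable one_ne_zero z).hasDerivAt)).sub_const (m z)
    refine (hmz.mul ((hshear.hasDerivAt_slice_snd hs z h0).const_mul (W (z, 0)))).congr_deriv ?_
    simp only [add_zero, sub_self, zero_mul]
    ring
  have hid : (fun t => k t * A t) =ᶠ[nhds 0] fun t => k 0 * A t - k 0 * D t := by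
    filter_upwards [hs.mem_nhds h0] with t ht
    have hwwt : Continuous fun z => W (z, 0) * W (z + t, t) :=
      hw.continuous.mul ((hW₁.contDiff_slice ht).continuous.comp (continuous_add_const t))
    have hmt : Continuous fun z => m (z + t) := hm.continuous.comp (continuous_add_const t)
    rw [eigenvalue_mul_integral_shift_eq hab hm.continuous hW h0 hode hbc ht, ← mul_sub]
    simp only [A, D]
    rw [← intervalIntegral.integral_sub]
    · exact congrArg _ (integral_congr fun z _ => by ring)
    · exact (hmt.mul hwwt).intervalIntegrable _ _
    · exact ((hmt.sub hm.continuous).mul hwwt).intervalIntegrable _ _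
  have hA0 : A 0 = 1 := by
    rw [← hnorm]
    refine integral_congr fun z _ => ?_
    simp only [add_zero]
    ring
  have h := (hk.hasDerivAt.mul hA).unique
    (((hA.const_mul (k 0)).sub (hD.const_mul (k 0))).congr_of_eventuallyEq hid)
  rw [hA0] at h
  linarith

theorem sq_apply_neg_lt_sq_of_dirichlet (hsum : 0 < α + β) {w p : ℝ → ℝ}
    (hw : ContDiff ℝ 2 w) (hp : p.Even) (hwα : w α = 0) (hwpos : ∀ y ∈ Ioo α β, 0 < w y)
    (hw'' : ∀ y ∈ Ioo α β, deriv (deriv w) y = -(p y * w y)) :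
    ∀ x ∈ Ioc 0 (-α), w (-x) ^ 2 < w x ^ 2 := by
  intro x hx
  have hlt := apply_neg_lt_apply_of_ode hw hp (by rwa [neg_neg])
    (fun y hy => hwpos y ⟨by linarith [hx.1, hx.2, hy.1], by linarith [hy.2]⟩)
    (fun y hy => hw'' y ⟨by linarith [hy.1], by linarith [hy.2]⟩) x hx
  have hw_neg : 0 ≤ w (-x) := by
    rcases (le_neg.1 hx.2).eq_or_lt with h | h
    · rw [← h, hwα]
    · exact (hwpos _ ⟨h, by linarith [hx.1]⟩).le
  exact pow_lt_pow_left₀ hlt hw_neg two_ne_zero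

end Eigenvalue

theorem stmt_13_general (α β : ℝ) (hab : α < β) (hsum : 0 < α + β)
    (m : ℝ → ℝ) (hm : ContDiff ℝ 1 m)
    (hmeven : ∀ y, m (-y) = m y) (hm' : ∀ y : ℝ, 0 < y → 0 ≤ deriv m y)
    (ε : ℝ) (hε : 0 < ε)
    (k₁ : ℝ → ℝ) (W : ℝ × ℝ → ℝ)
    (hW : ContDiffOn ℝ 2 W (Set.univ ×ˢ Set.Ioo (-ε) ε))
    (hk : DifferentiableAt ℝ k₁ 0)
    (hode : ∀ t ∈ Set.Ioo (-ε) ε, ∀ y ∈ Set.Ioo (α + t) (β + t),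
      deriv (deriv (fun s => W (s, t))) y = -(k₁ t * m y * W (y, t)))
    (hbc : ∀ t ∈ Set.Ioo (-ε) ε, W (α + t, t) = 0 ∧ W (β + t, t) = 0)
    (hWpos : ∀ t ∈ Set.Ioo (-ε) ε, ∀ y ∈ Set.Ioo (α + t) (β + t), 0 < W (y, t))
    (hnorm : ∀ t ∈ Set.Ioo (-ε) ε,
      (∫ y in (α + t)..(β + t), (W (y, t)) ^ 2 * m y) = 1) :
    deriv k₁ 0 ≤ 0 ∧
      ((¬ ∃ C : ℝ, ∀ y ∈ Set.Ioo α β, m y = C) → deriv k₁ 0 < 0) := by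
  have h0 : (0 : ℝ) ∈ Ioo (-ε) ε := ⟨neg_neg_of_pos hε, hε⟩
  have hw : ContDiff ℝ 2 fun y => W (y, 0) := hW.contDiff_slice h0
  have hwα : W (α, 0) = 0 := by simpa using (hbc 0 h0).1
  have hwβ : W (β, 0) = 0 := by simpa using (hbc 0 h0).2
  have hwpos : ∀ y ∈ Ioo α β, 0 < W (y, 0) := fun y hy => by
    simpa using hWpos 0 h0 y (by simpa using hy)
  have hwode : ∀ y ∈ Ioo α β, deriv (deriv fun s => W (s, 0)) y = -(k₁ 0 * m y * W (y, 0)) :=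
    fun y hy => by simpa using hode 0 h0 y (by simpa using hy)
  have hnorm₀ : ∫ y in α..β, W (y, 0) ^ 2 * m y = 1 := by simpa using hnorm 0 h0
  have hmid : (α + β) / 2 ∈ Ioo α β := ⟨by linarith, by linarith⟩
  have hk₀ : 0 < k₁ 0 := eigenvalue_pos_of_dirichlet hab.le hw hm.continuous hwα hwβ hwode
    hnorm₀ hmid (hwpos _ hmid).ne'
  have hodd : (deriv m).Odd := Function.Even.odd_deriv hmeven
  have hm'₀ : ∀ y, 0 ≤ y → 0 ≤ deriv m y := fun y hy =>
    hy.eq_or_lt.elim (fun h => h ▸ hodd.map_zero.ge) (hm' y)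
  have hrefl := sq_apply_neg_lt_sq_of_dirichlet hsum hw (p := fun y => k₁ 0 * m y)
    (fun y => by simp only [hmeven]) hwα hwpos hwode
  rw [deriv_eigenvalue_eq hab.le isOpen_Ioo h0 hm hW hk hode hbc hnorm₀, neg_nonpos, neg_lt_zero]
  have hm'c : Continuous (deriv m) := hm.continuous_deriv le_rfl
  refine ⟨mul_nonneg hk₀.le (integral_odd_mul_nonneg hab hsum hm'c hodd hm'₀ (hw.continuous.pow 2)
    (fun _ _ => sq_nonneg _) fun x hx => (hrefl x hx).le), fun hnc => mul_pos hk₀ ?_⟩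
  obtain ⟨z, hz, hmz⟩ := exists_deriv_ne_zero_of_not_const (hm.differentiable one_ne_zero) hnc
  exact integral_odd_mul_pos hab hsum hm'c hodd hm'₀ (hw.continuous.pow 2) (fun _ _ => sq_nonneg _)
    (fun y hy => pow_pos (hwpos y hy) 2) hrefl hz hmz

/-- Lemma 3.4 (i): let `α < β` with `α + β > 0`, let `m` be a `C¹`, positive, even
function with `m' ≥ 0` on `(0,∞)`, and for `t ∈ (-ε,ε)` let `W(·,t)` be the
normalized positive first eigenfunction of the translated Dirichlet problem
`-∂²_y W = k₁(t) m W` in `(α+t, β+t)`, `W(α+t,t) = W(β+t,t) = 0`,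
`∫_{α+t}^{β+t} W(y,t)² m(y) dy = 1`. If `W` is twice continuously differentiable
in `(y,t)` and `k₁` is differentiable at `0`, then `k₁'(0) ≤ 0`, with strict
inequality unless `m` is constant on `(α,β)`. -/
theorem stmt_13 (α β : ℝ) (hab : α < β) (hsum : 0 < α + β)
    (m : ℝ → ℝ) (hm : ContDiff ℝ 1 m) (hmpos : ∀ y, 0 < m y)
    (hmeven : ∀ y, m (-y) = m y) (hm' : ∀ y : ℝ, 0 < y → 0 ≤ deriv m y)
    (ε : ℝ) (hε : 0 < ε)
    (k₁ : ℝ → ℝ) (W : ℝ × ℝ → ℝ)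
    (hW : ContDiffOn ℝ 2 W (Set.univ ×ˢ Set.Ioo (-ε) ε))
    (hk : DifferentiableAt ℝ k₁ 0)
    (hode : ∀ t ∈ Set.Ioo (-ε) ε, ∀ y ∈ Set.Ioo (α + t) (β + t),
      deriv (deriv (fun s => W (s, t))) y = -(k₁ t * m y * W (y, t)))
    (hbc : ∀ t ∈ Set.Ioo (-ε) ε, W (α + t, t) = 0 ∧ W (β + t, t) = 0)
    (hWpos : ∀ t ∈ Set.Ioo (-ε) ε, ∀ y ∈ Set.Ioo (α + t) (β + t), 0 < W (y, t))
    (hnorm : ∀ t ∈ Set.Ioo (-ε) ε,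
      (∫ y in (α + t)..(β + t), (W (y, t)) ^ 2 * m y) = 1) :
    deriv k₁ 0 ≤ 0 ∧
      ((¬ ∃ C : ℝ, ∀ y ∈ Set.Ioo α β, m y = C) → deriv k₁ 0 < 0) :=
  stmt_13_general α β hab hsum m hm hmeven hm' ε hε k₁ W hW hk hode hbc hWpos hnorm
end

section
/- Let N ≥ 1, let h : [0,∞) → ℝ be continuous, and let dγ_h = e^{h(|x|)} dx on ℝᴺ. Let Ω ⊂ ℝᴺ be a bounded measurable set and R > 0 be such that γ_h(Ω) = γ_h(B_R), where B_R is the open ball of radius R centered at the origin. Then: (a) for every nonincreasing measurable function f : [0,∞) → [0,∞), ∫_Ω f(|x|) dγ_h ≤ ∫_{B_R} f(|x|) dγ_h; (b) for every nondecreasing bounded measurable function g : [0,∞) → [0,∞), ∫_Ω g(|x|) dγ_h ≥ ∫_{B_R} g(|x|) dγ_h. -/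
open MeasureTheory Set

/-!
Compare `Ω` and the ball `B = B_R` on their symmetric difference. On `Ω \ B` we have `|x| ≥ R` and
on `B \ Ω` we have `|x| < R`, so a nonincreasing `f` satisfies `f(|x|) ≤ f(R)` on the first piece
and `f(|x|) ≥ f(R)` on the second. Since `γ_h(Ω \ B) = γ_h(B \ Ω)`, integrating `f(|x|) - f(R)`
against `γ_h` gives the inequality; the nondecreasing case is the same with the roles of `Ω` and
`B` exchanged.
-/

section Bathtub

variable {X : Type*} [MeasurableSpace X] {μ : Measure X} {s t : Set X}

theorem setIntegral_le_setIntegral_of_nonpos_sdiff (hs : MeasurableSet s) (ht : MeasurableSet t)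
    {ψ : X → ℝ} (hψs : IntegrableOn ψ s μ) (hψt : IntegrableOn ψ t μ)
    (hst : ∀ x ∈ s \ t, ψ x ≤ 0) (hts : ∀ x ∈ t \ s, 0 ≤ ψ x) :
    ∫ x in s, ψ x ∂μ ≤ ∫ x in t, ψ x ∂μ := by
  rw [← integral_inter_add_sdiff ht hψs, ← integral_inter_add_sdiff hs hψt, inter_comm t s]
  have h₁ : ∫ x in s \ t, ψ x ∂μ ≤ 0 := setIntegral_nonpos (hs.diff ht) hst
  have h₂ : 0 ≤ ∫ x in t \ s, ψ x ∂μ := setIntegral_nonneg (ht.diff hs) hts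
  linarith

theorem setIntegral_mul_le_of_setIntegral_eq (hs : MeasurableSet s) (ht : MeasurableSet t)
    {φ w : X → ℝ} {c : ℝ} (hφws : IntegrableOn (fun x => φ x * w x) s μ)
    (hφwt : IntegrableOn (fun x => φ x * w x) t μ) (hws : IntegrableOn w s μ)
    (hwt : IntegrableOn w t μ) (hw₀ : ∀ x, 0 ≤ w x) (hw : ∫ x in s, w x ∂μ = ∫ x in t, w x ∂μ)
    (hst : ∀ x ∈ s \ t, φ x ≤ c) (hts : ∀ x ∈ t \ s, c ≤ φ x) :
    ∫ x in s, φ x * w x ∂μ ≤ ∫ x in t, φ x * w x ∂μ := by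
  have key := setIntegral_le_setIntegral_of_nonpos_sdiff (ψ := fun x => φ x * w x - c * w x) hs ht
    (hφws.sub (hws.const_mul c)) (hφwt.sub (hwt.const_mul c))
    (fun x hx => by nlinarith [hst x hx, hw₀ x]) (fun x hx => by nlinarith [hts x hx, hw₀ x])
  rw [integral_sub hφws (hws.const_mul c), integral_sub hφwt (hwt.const_mul c),
    integral_const_mul, integral_const_mul, hw] at key
  linarith

end Bathtub

section Integrability

variable {E : Type*} [PseudoMetricSpace E] [ProperSpace E] [MeasurableSpace E]
  [OpensMeasurableSpace E] {μ : Measure E} [IsFiniteMeasureOnCompacts μ] {s : Set E} {w : E → ℝ}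

theorem Continuous.integrableOn_of_isBounded (hw : Continuous w) (hs : Bornology.IsBounded s) :
    IntegrableOn w s μ :=
  (hw.continuousOn.integrableOn_compact' hs.isCompact_closure
    isClosed_closure.measurableSet).mono_set subset_closure

theorem Continuous.integrableOn_mul_of_isBounded (hw : Continuous w) (hs : Bornology.IsBounded s)
    (hsm : MeasurableSet s) {φ : E → ℝ} (hφ : AEStronglyMeasurable φ (μ.restrict s)) {C : ℝ}
    (hC : ∀ x ∈ s, ‖φ x‖ ≤ C) : IntegrableOn (fun x => φ x * w x) s μ :=
  (hw.integrableOn_of_isBounded hs).bdd_mul hφ ((ae_restrict_iff' hsm).2 (ae_of_all _ hC))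

end Integrability

theorem stmt_18_general (N : ℕ) (h : ℝ → ℝ) (hh : ContinuousOn h (Set.Ici 0))
    (Ω : Set (EuclideanSpace ℝ (Fin N))) (hΩm : MeasurableSet Ω)
    (hΩb : Bornology.IsBounded Ω) (R : ℝ) (hR : 0 < R)
    (hmeas : (∫ x in Ω, Real.exp (h ‖x‖)) =
      ∫ x in Metric.ball (0 : EuclideanSpace ℝ (Fin N)) R, Real.exp (h ‖x‖)) :
    (∀ f : ℝ → ℝ, Measurable f → (∀ r : ℝ, 0 ≤ r → 0 ≤ f r) →
      AntitoneOn f (Set.Ici 0) →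
      (∫ x in Ω, f ‖x‖ * Real.exp (h ‖x‖)) ≤
        ∫ x in Metric.ball (0 : EuclideanSpace ℝ (Fin N)) R, f ‖x‖ * Real.exp (h ‖x‖)) ∧
    (∀ g : ℝ → ℝ, Measurable g → (∀ r : ℝ, 0 ≤ r → 0 ≤ g r) →
      MonotoneOn g (Set.Ici 0) → (∃ M : ℝ, ∀ r : ℝ, 0 ≤ r → g r ≤ M) →
      (∫ x in Metric.ball (0 : EuclideanSpace ℝ (Fin N)) R, g ‖x‖ * Real.exp (h ‖x‖)) ≤
        ∫ x in Ω, g ‖x‖ * Real.exp (h ‖x‖)) := by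
  set B := Metric.ball (0 : EuclideanSpace ℝ (Fin N)) R
  have hw : Continuous fun x : EuclideanSpace ℝ (Fin N) => Real.exp (h ‖x‖) :=
    Real.continuous_exp.comp (hh.comp_continuous continuous_norm fun x => norm_nonneg x)
  have hint : ∀ φ : ℝ → ℝ, Measurable φ → ∀ C, (∀ r, 0 ≤ r → ‖φ r‖ ≤ C) →
      ∀ s : Set (EuclideanSpace ℝ (Fin N)), Bornology.IsBounded s → MeasurableSet s →
        IntegrableOn (fun x => φ ‖x‖ * Real.exp (h ‖x‖)) s :=
    fun φ hφ C hC s hs hsm => hw.integrableOn_mul_of_isBounded hs hsm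
      (hφ.comp measurable_norm).aestronglyMeasurable fun x _ => hC _ (norm_nonneg x)
  have hR_le_norm : ∀ x ∈ Ω \ B, R ≤ ‖x‖ := fun x hx => by simpa [B] using hx.2
  have hnorm_le_R : ∀ x ∈ B \ Ω, ‖x‖ ≤ R := fun x hx => (mem_ball_zero_iff.1 hx.1).le
  have hR₀ : R ∈ Ici 0 := hR.le
  constructor
  · intro f hf hf₀ hfa
    have hC : ∀ r, 0 ≤ r → ‖f r‖ ≤ f 0 := fun r hr => by
      rw [Real.norm_of_nonneg (hf₀ r hr)]; exact hfa self_mem_Ici hr hr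
    exact setIntegral_mul_le_of_setIntegral_eq hΩm measurableSet_ball (c := f R)
      (hint f hf _ hC Ω hΩb hΩm) (hint f hf _ hC B Metric.isBounded_ball measurableSet_ball)
      (hw.integrableOn_of_isBounded hΩb) (hw.integrableOn_of_isBounded Metric.isBounded_ball)
      (fun _ => (Real.exp_pos _).le) hmeas
      (fun x hx => hfa hR₀ (norm_nonneg x) (hR_le_norm x hx))
      (fun x hx => hfa (norm_nonneg x) hR₀ (hnorm_le_R x hx))
  · rintro g hg hg₀ hgm ⟨M, hM⟩
    have hC : ∀ r, 0 ≤ r → ‖g r‖ ≤ M := fun r hr => by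
      rw [Real.norm_of_nonneg (hg₀ r hr)]; exact hM r hr
    exact setIntegral_mul_le_of_setIntegral_eq measurableSet_ball hΩm (c := g R)
      (hint g hg _ hC B Metric.isBounded_ball measurableSet_ball) (hint g hg _ hC Ω hΩb hΩm)
      (hw.integrableOn_of_isBounded Metric.isBounded_ball) (hw.integrableOn_of_isBounded hΩb)
      (fun _ => (Real.exp_pos _).le) hmeas.symm
      (fun x hx => hgm (norm_nonneg x) hR₀ (hnorm_le_R x hx))
      (fun x hx => hgm hR₀ (norm_nonneg x) (hR_le_norm x hx))

/-- Hardy–Littlewood type rearrangement inequalities used in the proof of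
Theorem 1.2: if `Ω ⊆ ℝᴺ` is a bounded measurable set with the same
`γ_h`-measure as the centered ball `B_R` (where `dγ_h = e^{h(|x|)} dx`), then the
`γ_h`-integral over `Ω` of a nonincreasing radial function is at most its
`γ_h`-integral over `B_R`, and the `γ_h`-integral over `Ω` of a nondecreasing
bounded radial function is at least its `γ_h`-integral over `B_R`. -/
theorem stmt_18 (N : ℕ) (hN : 1 ≤ N) (h : ℝ → ℝ) (hh : ContinuousOn h (Set.Ici 0))
    (Ω : Set (EuclideanSpace ℝ (Fin N))) (hΩm : MeasurableSet Ω)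
    (hΩb : Bornology.IsBounded Ω) (R : ℝ) (hR : 0 < R)
    (hmeas : (∫ x in Ω, Real.exp (h ‖x‖)) =
      ∫ x in Metric.ball (0 : EuclideanSpace ℝ (Fin N)) R, Real.exp (h ‖x‖)) :
    (∀ f : ℝ → ℝ, Measurable f → (∀ r : ℝ, 0 ≤ r → 0 ≤ f r) →
      AntitoneOn f (Set.Ici 0) →
      (∫ x in Ω, f ‖x‖ * Real.exp (h ‖x‖)) ≤
        ∫ x in Metric.ball (0 : EuclideanSpace ℝ (Fin N)) R, f ‖x‖ * Real.exp (h ‖x‖)) ∧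
    (∀ g : ℝ → ℝ, Measurable g → (∀ r : ℝ, 0 ≤ r → 0 ≤ g r) →
      MonotoneOn g (Set.Ici 0) → (∃ M : ℝ, ∀ r : ℝ, 0 ≤ r → g r ≤ M) →
      (∫ x in Metric.ball (0 : EuclideanSpace ℝ (Fin N)) R, g ‖x‖ * Real.exp (h ‖x‖)) ≤
        ∫ x in Ω, g ‖x‖ * Real.exp (h ‖x‖)) :=
  stmt_18_general N h hh Ω hΩm hΩb R hR hmeas
end

section
/- In ℝ² with the weight e^{x²+y²} (dγ₂ = e^{x²+y²} dx dy), for every r > 0 one has μ₁(B_r; γ₂) < k(r), where k(r) := (2 e^{r²} − 2) / (r² e^{r²} − e^{r²} + 1) and B_r is the open disk of radius r centered at the origin. (This follows by using the coordinate functions x and y as trial functions in the variational characterization of μ₁.) -/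
/-!
The coordinate function `x 0` has weighted mean zero on `B_r` by odd symmetry, and its Rayleigh
quotient is exactly `m₀ / m₂ = k(r)`, where `m_b = ∫_{B_r} (x 0)^b dγ₂`. Strictness comes from
`x 0` not being a critical point of the Rayleigh quotient: along `x 0 + t (x 0)^3` the quotient is
a ratio of quadratics in `t` with derivative `2 (3 m₂² - m₀ m₄) / m₂²` at `t = 0`, and
`3 m₂² - m₀ m₄ = (3π²/8) e^{r²} r² ((r² - 2) e^{r²} + r² + 2) > 0`. The moments are computed in
polar coordinates.
-/

open MeasureTheory Set

/-- The first nontrivial Neumann eigenvalue of `-div(e^{h(|x|)} ∇v) = μ e^{h(|x|)} v`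
on `Ω ⊆ ℝᴺ`, defined variationally as the infimum of the weighted Rayleigh quotient
over smooth trial functions with weighted mean zero. -/
noncomputable def weightedMu1 (N : ℕ) (h : ℝ → ℝ) (Ω : Set (EuclideanSpace ℝ (Fin N))) : ℝ :=
  sInf { μ : ℝ | ∃ v : EuclideanSpace ℝ (Fin N) → ℝ, ContDiff ℝ 1 v ∧
    0 < (∫ x in Ω, (v x) ^ 2 * Real.exp (h ‖x‖)) ∧
    (∫ x in Ω, v x * Real.exp (h ‖x‖)) = 0 ∧
    μ = (∫ x in Ω, ‖fderiv ℝ v x‖ ^ 2 * Real.exp (h ‖x‖)) /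
        ∫ x in Ω, (v x) ^ 2 * Real.exp (h ‖x‖) }

open Real Filter Topology

local notation "ℝ²" => EuclideanSpace ℝ (Fin 2)

theorem weightedMu1_le {N : ℕ} {h : ℝ → ℝ} {Ω : Set (EuclideanSpace ℝ (Fin N))}
    {v : EuclideanSpace ℝ (Fin N) → ℝ} (hv : ContDiff ℝ 1 v)
    (hpos : 0 < ∫ x in Ω, v x ^ 2 * exp (h ‖x‖)) (hmean : ∫ x in Ω, v x * exp (h ‖x‖) = 0) :
    weightedMu1 N h Ω ≤
      (∫ x in Ω, ‖fderiv ℝ v x‖ ^ 2 * exp (h ‖x‖)) / ∫ x in Ω, v x ^ 2 * exp (h ‖x‖) := by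
  refine csInf_le ⟨0, ?_⟩ ⟨v, hv, hpos, hmean, rfl⟩
  rintro μ ⟨w, -, hwpos, -, rfl⟩
  exact div_nonneg (integral_nonneg fun x => by positivity) hwpos.le

theorem exists_div_lt_of_hasDerivAt {N D : ℝ → ℝ} {N' D' a : ℝ} (hN : HasDerivAt N N' a)
    (hD : HasDerivAt D D' a) (hDa : 0 < D a) (h : N' * D a ≠ N a * D') :
    ∃ t, 0 < D t ∧ N t / D t < N a / D a := by
  have hq : HasDerivAt (fun t => N t / D t) ((N' * D a - N a * D') / D a ^ 2) a :=
    hN.div hD hDa.ne'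
  have hnotMin : ¬IsLocalMin (fun t => N t / D t) a := fun hmin =>
    h (sub_eq_zero.mp ((div_eq_zero_iff.mp (hmin.hasDerivAt_eq_zero hq)).resolve_right
      (by positivity)))
  have hpos : ∀ᶠ t in 𝓝 a, 0 < D t := hD.continuousAt.eventually (lt_mem_nhds hDa)
  obtain ⟨t, hlt, hDt⟩ := ((not_eventually.mp hnotMin).and_eventually hpos).exists
  exact ⟨t, hDt, not_le.mp hlt⟩

theorem hasDerivAt_quadratic (a b c x : ℝ) :
    HasDerivAt (fun t => a + b * t + c * t ^ 2) (b + 2 * c * x) x :=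
  (((hasDerivAt_id' x).const_mul b).const_add a |>.add
    ((hasDerivAt_pow 2 x).const_mul c)).congr_deriv
      (by simp only [Nat.add_one_sub_one, pow_one, Nat.cast_ofNat]; ring)

theorem exists_quadratic_div_lt {a₀ a₁ a₂ b₀ b₁ b₂ : ℝ} (hb₀ : 0 < b₀)
    (h : a₁ * b₀ ≠ a₀ * b₁) :
    ∃ t, 0 < b₀ + b₁ * t + b₂ * t ^ 2 ∧
      (a₀ + a₁ * t + a₂ * t ^ 2) / (b₀ + b₁ * t + b₂ * t ^ 2) < a₀ / b₀ := by
  simpa using exists_div_lt_of_hasDerivAt (hasDerivAt_quadratic a₀ a₁ a₂ 0)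
    (hasDerivAt_quadratic b₀ b₁ b₂ 0) (by simpa using hb₀) (by simpa using h)

theorem sub_two_mul_exp_add_add_two_pos {u : ℝ} (hu : 0 < u) :
    0 < (u - 2) * exp u + u + 2 := by
  have hmono : StrictMonoOn (fun u => u - 2 + (u + 2) * exp (-u)) (Ici 0) := by
    refine strictMonoOn_of_hasDerivWithinAt_pos (convex_Ici 0) (by fun_prop)
      (f' := fun u => 1 - (u + 1) * exp (-u)) (fun x _ => ?_) (fun x hx => ?_)
    · exact ((((hasDerivAt_id' x).sub_const 2).add (((hasDerivAt_id' x).add_const 2).mul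
        (hasDerivAt_neg x).exp)).congr_deriv (by ring)).hasDerivWithinAt
    · rw [interior_Ici, mem_Ioi] at hx
      have h := add_one_lt_exp hx.ne'
      rw [sub_pos, ← lt_div_iff₀ (exp_pos _), exp_neg, div_inv_eq_mul, one_mul]
      linarith
  have hφ : 0 < u - 2 + (u + 2) * exp (-u) := by simpa using hmono self_mem_Ici hu.le hu
  have hfactor : (u - 2) * exp u + u + 2 = exp u * (u - 2 + (u + 2) * exp (-u)) := by
    rw [exp_neg]; field_simp; ring
  rw [hfactor]
  exact mul_pos (exp_pos u) hφ

theorem EuclideanSpace.norm_proj {ι : Type*} [Fintype ι] (i : ι) :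
    ‖EuclideanSpace.proj (𝕜 := ℝ) (ι := ι) i‖ = 1 := by
  classical
  refine le_antisymm (ContinuousLinearMap.opNorm_le_bound _ zero_le_one fun x => ?_) ?_
  · rw [one_mul]; exact PiLp.norm_apply_le x i
  · simpa using
      (EuclideanSpace.proj (𝕜 := ℝ) i).le_opNorm (EuclideanSpace.single i 1)

theorem EuclideanSpace.norm_fderiv_comp_apply {ι : Type*} [Fintype ι] (i : ι) {f : ℝ → ℝ}
    {x : EuclideanSpace ℝ ι} (hf : DifferentiableAt ℝ f (x i)) :
    ‖fderiv ℝ (fun y : EuclideanSpace ℝ ι => f (y i)) x‖ = |deriv f (x i)| := by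
  have hderiv : HasFDerivAt (fun y : EuclideanSpace ℝ ι => f (y i))
      (deriv f (x i) • EuclideanSpace.proj (𝕜 := ℝ) i) x :=
    hf.hasDerivAt.comp_hasFDerivAt x (EuclideanSpace.proj (𝕜 := ℝ) i).hasFDerivAt
  rw [hderiv.fderiv, norm_smul, EuclideanSpace.norm_proj, mul_one, Real.norm_eq_abs]

theorem measurePreserving_euclideanSpace_fin_two_coords :
    MeasurePreserving (fun x : ℝ² => (x 0, x 1)) :=
  (volume_preserving_finTwoArrow ℝ).comp
    (EuclideanSpace.volume_preserving_symm_measurableEquiv_toLp (Fin 2))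

theorem measurableEmbedding_euclideanSpace_fin_two_coords :
    MeasurableEmbedding (fun x : ℝ² => (x 0, x 1)) :=
  ((MeasurableEquiv.toLp 2 (Fin 2 → ℝ)).symm.trans MeasurableEquiv.finTwoArrow).measurableEmbedding

theorem norm_euclideanSpace_fin_two (x : ℝ²) : ‖x‖ = √(x 0 ^ 2 + x 1 ^ 2) := by
  simp [EuclideanSpace.norm_eq, Fin.sum_univ_two]

theorem sqrt_polarCoord_symm (p : ℝ × ℝ) :
    √((polarCoord.symm p).1 ^ 2 + (polarCoord.symm p).2 ^ 2) = |p.1| := by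
  rw [polarCoord_symm_apply, ← sqrt_sq_eq_abs]
  congr 1
  linear_combination p.1 ^ 2 * sin_sq_add_cos_sq p.2

theorem integral_ball_eq_integral_polarCoord (r : ℝ) (f : ℝ × ℝ → ℝ) :
    ∫ x in Metric.ball (0 : ℝ²) r, f (x 0, x 1) =
      ∫ p in Ioo 0 r ×ˢ Ioo (-π) π, p.1 * f (polarCoord.symm p) := by
  set disc := {q : ℝ × ℝ | √(q.1 ^ 2 + q.2 ^ 2) < r}
  have hdisc : MeasurableSet disc := measurableSet_lt (by fun_prop) measurable_const
  have hball : Metric.ball (0 : ℝ²) r = (fun x : ℝ² => (x 0, x 1)) ⁻¹' disc := by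
    ext x; simp [disc, norm_euclideanSpace_fin_two]
  have hpre : polarCoord.target ∩ polarCoord.symm ⁻¹' disc = Ioo 0 r ×ˢ Ioo (-π) π := by
    ext p
    simp only [polarCoord_target, mem_inter_iff, mem_preimage, mem_ofPred_eq, disc,
      sqrt_polarCoord_symm, mem_prod, mem_Ioi, mem_Ioo]
    constructor
    · rintro ⟨⟨h0, hθ⟩, hr⟩; exact ⟨⟨h0, (le_abs_self _).trans_lt hr⟩, hθ⟩
    · rintro ⟨⟨h0, hr⟩, hθ⟩; exact ⟨⟨h0, hθ⟩, by rwa [abs_of_pos h0]⟩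
  rw [hball, measurePreserving_euclideanSpace_fin_two_coords.setIntegral_preimage_emb
    measurableEmbedding_euclideanSpace_fin_two_coords, ← integral_indicator hdisc,
    ← integral_comp_polarCoord_symm]
  have hind : (fun p : ℝ × ℝ => p.1 • disc.indicator f (polarCoord.symm p)) =
      (polarCoord.symm ⁻¹' disc).indicator (fun p => p.1 * f (polarCoord.symm p)) := by
    ext p
    by_cases hp : p ∈ polarCoord.symm ⁻¹' disc
    · rw [indicator_of_mem hp, indicator_of_mem (mem_preimage.mp hp), smul_eq_mul]
    · rw [indicator_of_notMem hp, indicator_of_notMem (mt mem_preimage.mpr hp), smul_zero]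
  rw [hind, setIntegral_indicator (hdisc.preimage (by fun_prop)), hpre]

theorem integral_pow_one_mul_exp_sq (r : ℝ) :
    ∫ s in 0..r, s ^ 1 * exp (s ^ 2) = (exp (r ^ 2) - 1) / 2 := by
  have hderiv : ∀ s ∈ uIcc 0 r, HasDerivAt (fun s => exp (s ^ 2) / 2) (s ^ 1 * exp (s ^ 2)) s :=
    fun s _ => ((hasDerivAt_pow 2 s).exp.div_const 2).congr_deriv (by ring)
  rw [intervalIntegral.integral_eq_sub_of_hasDerivAt hderiv
    (Continuous.intervalIntegrable (by fun_prop) _ _), zero_pow two_ne_zero, exp_zero]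
  ring

theorem integral_pow_add_two_mul_exp_sq (r : ℝ) (k : ℕ) :
    ∫ s in 0..r, s ^ (k + 2) * exp (s ^ 2) =
      r ^ (k + 1) * exp (r ^ 2) / 2 - (k + 1) / 2 * ∫ s in 0..r, s ^ k * exp (s ^ 2) := by
  have hderiv : ∀ s ∈ uIcc 0 r, HasDerivAt (fun s => s ^ (k + 1) * exp (s ^ 2) / 2)
      (s ^ (k + 2) * exp (s ^ 2) + (k + 1) / 2 * (s ^ k * exp (s ^ 2))) s := by
    intro s _
    refine (((hasDerivAt_pow (k + 1) s).mul (hasDerivAt_pow 2 s).exp).div_const 2).congr_deriv ?_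
    push_cast
    ring
  have hint := intervalIntegral.integral_eq_sub_of_hasDerivAt hderiv
    (Continuous.intervalIntegrable (by fun_prop) _ _)
  rw [intervalIntegral.integral_add (Continuous.intervalIntegrable (by fun_prop) _ _)
    (Continuous.intervalIntegrable (by fun_prop) _ _), intervalIntegral.integral_const_mul] at hint
  rw [zero_pow k.succ_ne_zero, zero_mul, zero_div, sub_zero] at hint
  linarith

theorem integral_cos_pow_add_two_neg_pi_pi (n : ℕ) :
    ∫ θ in -π..π, cos θ ^ (n + 2) = (n + 1) / (n + 2) * ∫ θ in -π..π, cos θ ^ n := by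
  simp [integral_cos_pow]

theorem integral_cos_pow_zero_neg_pi_pi : ∫ θ in -π..π, cos θ ^ 0 = 2 * π := by
  simp [two_mul]

theorem integral_cos_pow_odd_neg_pi_pi (n : ℕ) : ∫ θ in -π..π, cos θ ^ (2 * n + 1) = 0 := by
  induction n with
  | zero => simp
  | succ n ih => rw [show 2 * (n + 1) + 1 = 2 * n + 1 + 2 by ring,
      integral_cos_pow_add_two_neg_pi_pi, ih, mul_zero]

noncomputable def ballMoment (r : ℝ) (b : ℕ) : ℝ :=
  ∫ x in Metric.ball (0 : ℝ²) r, x 0 ^ b * exp (‖x‖ ^ 2)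

theorem ballMoment_eq_mul {r : ℝ} (hr : 0 ≤ r) (b : ℕ) :
    ballMoment r b = (∫ s in 0..r, s ^ (b + 1) * exp (s ^ 2)) * ∫ θ in -π..π, cos θ ^ b := by
  have hpolar := integral_ball_eq_integral_polarCoord r fun q => q.1 ^ b * exp (q.1 ^ 2 + q.2 ^ 2)
  have hsep : ∀ p : ℝ × ℝ, p.1 * ((polarCoord.symm p).1 ^ b *
      exp ((polarCoord.symm p).1 ^ 2 + (polarCoord.symm p).2 ^ 2)) =
        p.1 ^ (b + 1) * exp (p.1 ^ 2) * cos p.2 ^ b := by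
    intro p
    rw [polarCoord_symm_apply, show (p.1 * cos p.2) ^ 2 + (p.1 * sin p.2) ^ 2 = p.1 ^ 2 by
      linear_combination p.1 ^ 2 * sin_sq_add_cos_sq p.2]
    ring
  simp only [hsep] at hpolar
  rw [ballMoment]
  simp only [EuclideanSpace.real_norm_sq_eq, Fin.sum_univ_two]
  rw [hpolar, Measure.volume_eq_prod, intervalIntegral.integral_of_le hr,
    intervalIntegral.integral_of_le (neg_le_self pi_pos.le), integral_Ioc_eq_integral_Ioo,
    integral_Ioc_eq_integral_Ioo]
  exact setIntegral_prod_mul (fun s => s ^ (b + 1) * exp (s ^ 2)) (fun θ => cos θ ^ b) _ _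

theorem integrableOn_coord_pow_mul_exp (r : ℝ) (b : ℕ) :
    IntegrableOn (fun x : ℝ² => x 0 ^ b * exp (‖x‖ ^ 2)) (Metric.ball 0 r) :=
  ((Continuous.continuousOn (by fun_prop)).integrableOn_compact
    (isCompact_closedBall 0 r)).mono_set Metric.ball_subset_closedBall

theorem ballMoment_odd {r : ℝ} (hr : 0 ≤ r) (n : ℕ) : ballMoment r (2 * n + 1) = 0 := by
  rw [ballMoment_eq_mul hr, integral_cos_pow_odd_neg_pi_pi, mul_zero]

theorem ballMoment_zero {r : ℝ} (hr : 0 ≤ r) : ballMoment r 0 = π * (exp (r ^ 2) - 1) := by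
  rw [ballMoment_eq_mul hr, integral_pow_one_mul_exp_sq, integral_cos_pow_zero_neg_pi_pi]
  ring

theorem ballMoment_two {r : ℝ} (hr : 0 ≤ r) :
    ballMoment r 2 = π * ((r ^ 2 - 1) * exp (r ^ 2) + 1) / 2 := by
  rw [ballMoment_eq_mul hr, integral_pow_add_two_mul_exp_sq, integral_pow_one_mul_exp_sq,
    integral_cos_pow_add_two_neg_pi_pi, integral_cos_pow_zero_neg_pi_pi]
  push_cast; ring

theorem ballMoment_four {r : ℝ} (hr : 0 ≤ r) :
    ballMoment r 4 = 3 * π / 8 * ((r ^ 4 - 2 * r ^ 2 + 2) * exp (r ^ 2) - 2) := by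
  rw [ballMoment_eq_mul hr, integral_pow_add_two_mul_exp_sq, integral_pow_add_two_mul_exp_sq,
    integral_pow_one_mul_exp_sq, integral_cos_pow_add_two_neg_pi_pi,
    integral_cos_pow_add_two_neg_pi_pi, integral_cos_pow_zero_neg_pi_pi]
  push_cast; ring

theorem ballMoment_two_pos {r : ℝ} (hr : 0 < r) : 0 < ballMoment r 2 := by
  have h := add_one_lt_exp (neg_ne_zero.mpr (pow_pos hr 2).ne')
  have : (1 - r ^ 2) * exp (r ^ 2) < 1 := by
    rw [← lt_div_iff₀ (exp_pos _), one_div, ← exp_neg]; linarith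
  rw [ballMoment_two hr.le]
  nlinarith [pi_pos]

theorem ballMoment_zero_mul_ballMoment_four_lt {r : ℝ} (hr : 0 < r) :
    ballMoment r 0 * ballMoment r 4 < 3 * ballMoment r 2 ^ 2 := by
  have hgap : 3 * ballMoment r 2 ^ 2 - ballMoment r 0 * ballMoment r 4 =
      3 * π ^ 2 / 8 * (exp (r ^ 2) * r ^ 2 * ((r ^ 2 - 2) * exp (r ^ 2) + r ^ 2 + 2)) := by
    rw [ballMoment_zero hr.le, ballMoment_two hr.le, ballMoment_four hr.le]; ring
  have hfactor := sub_two_mul_exp_add_add_two_pos (pow_pos hr 2)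
  rw [← sub_pos, hgap]
  positivity

theorem ballMoment_zero_div_ballMoment_two {r : ℝ} (hr : 0 < r) :
    ballMoment r 0 / ballMoment r 2 =
      (2 * exp (r ^ 2) - 2) / (r ^ 2 * exp (r ^ 2) - exp (r ^ 2) + 1) := by
  have h2 := ballMoment_two_pos hr
  rw [ballMoment_two hr.le] at h2 ⊢
  rw [ballMoment_zero hr.le, div_eq_div_iff h2.ne' (by nlinarith [pi_pos])]
  ring

theorem integral_add_const_mul_add_const_mul {α : Type*} [MeasurableSpace α] {μ : Measure α}
    {f g h : α → ℝ} (hf : Integrable f μ) (hg : Integrable g μ) (hh : Integrable h μ) (c d : ℝ) :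
    ∫ x, (f x + c * g x + d * h x) ∂μ = ∫ x, f x ∂μ + c * ∫ x, g x ∂μ + d * ∫ x, h x ∂μ := by
  rw [integral_add (f := fun x => f x + c * g x) (hf.add (hg.const_mul c)) (hh.const_mul d),
    integral_add hf (hg.const_mul c), integral_const_mul, integral_const_mul]

theorem weightedMu1_ball_le {r : ℝ} (hr : 0 ≤ r) (t : ℝ)
    (hden : 0 < ballMoment r 2 + 2 * ballMoment r 4 * t + ballMoment r 6 * t ^ 2) :
    weightedMu1 2 (fun s => s ^ 2) (Metric.ball 0 r) ≤
      (ballMoment r 0 + 6 * ballMoment r 2 * t + 9 * ballMoment r 4 * t ^ 2) /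
        (ballMoment r 2 + 2 * ballMoment r 4 * t + ballMoment r 6 * t ^ 2) := by
  have hint := integrableOn_coord_pow_mul_exp r
  have hderiv (x : ℝ²) : HasDerivAt (fun s => s + t * s ^ 3) (1 + 3 * t * x 0 ^ 2) (x 0) :=
    ((hasDerivAt_id' _).add ((hasDerivAt_pow 3 _).const_mul t)).congr_deriv (by push_cast; ring)
  have hgrad (x : ℝ²) :
      ‖fderiv ℝ (fun y : ℝ² => y 0 + t * y 0 ^ 3) x‖ ^ 2 = (1 + 3 * t * x 0 ^ 2) ^ 2 := by
    rw [EuclideanSpace.norm_fderiv_comp_apply 0 (f := fun s => s + t * s ^ 3)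
      (hderiv x).differentiableAt, (hderiv x).deriv, sq_abs]
  have hnum : ∫ x in Metric.ball (0 : ℝ²) r,
      ‖fderiv ℝ (fun y : ℝ² => y 0 + t * y 0 ^ 3) x‖ ^ 2 * exp (‖x‖ ^ 2) =
        ballMoment r 0 + 6 * ballMoment r 2 * t + 9 * ballMoment r 4 * t ^ 2 := by
    simp_rw [hgrad, show ∀ x : ℝ², (1 + 3 * t * x 0 ^ 2) ^ 2 * exp (‖x‖ ^ 2) =
      x 0 ^ 0 * exp (‖x‖ ^ 2) + 6 * t * (x 0 ^ 2 * exp (‖x‖ ^ 2)) +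
        9 * t ^ 2 * (x 0 ^ 4 * exp (‖x‖ ^ 2)) from fun x => by ring]
    rw [integral_add_const_mul_add_const_mul (hint 0) (hint 2) (hint 4)]
    simp only [ballMoment]; ring
  have hsq : ∫ x in Metric.ball (0 : ℝ²) r, (x 0 + t * x 0 ^ 3) ^ 2 * exp (‖x‖ ^ 2) =
      ballMoment r 2 + 2 * ballMoment r 4 * t + ballMoment r 6 * t ^ 2 := by
    simp_rw [show ∀ x : ℝ², (x 0 + t * x 0 ^ 3) ^ 2 * exp (‖x‖ ^ 2) =
      x 0 ^ 2 * exp (‖x‖ ^ 2) + 2 * t * (x 0 ^ 4 * exp (‖x‖ ^ 2)) +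
        t ^ 2 * (x 0 ^ 6 * exp (‖x‖ ^ 2)) from fun x => by ring]
    rw [integral_add_const_mul_add_const_mul (hint 2) (hint 4) (hint 6)]
    simp only [ballMoment]; ring
  have hmean : ∫ x in Metric.ball (0 : ℝ²) r, (x 0 + t * x 0 ^ 3) * exp (‖x‖ ^ 2) = 0 := by
    simp_rw [show ∀ x : ℝ², (x 0 + t * x 0 ^ 3) * exp (‖x‖ ^ 2) =
      x 0 ^ 1 * exp (‖x‖ ^ 2) + t * (x 0 ^ 3 * exp (‖x‖ ^ 2)) from fun x => by ring]
    rw [integral_add (hint 1) ((hint 3).const_mul t), integral_const_mul]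
    change ballMoment r (2 * 0 + 1) + t * ballMoment r (2 * 1 + 1) = 0
    rw [ballMoment_odd hr, ballMoment_odd hr, mul_zero, add_zero]
  rw [← hnum, ← hsq]
  exact weightedMu1_le (by fun_prop) (hsq ▸ hden) hmean

/-- In ℝ² with the anti-Gaussian weight `e^{x²+y²}`, using the coordinate functions
as trial functions shows that for every `r > 0`,
`μ₁(B_r; γ₂) < k(r) = (2e^{r²} - 2)/(r² e^{r²} - e^{r²} + 1)`. -/
theorem stmt_19 (r : ℝ) (hr : 0 < r) :
    weightedMu1 2 (fun s => s ^ 2) (Metric.ball (0 : EuclideanSpace ℝ (Fin 2)) r) <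
      (2 * Real.exp (r ^ 2) - 2) / (r ^ 2 * Real.exp (r ^ 2) - Real.exp (r ^ 2) + 1) := by
  have hcrit : 6 * ballMoment r 2 * ballMoment r 2 ≠ ballMoment r 0 * (2 * ballMoment r 4) :=
    ne_of_gt (by linarith [ballMoment_zero_mul_ballMoment_four_lt hr])
  obtain ⟨t, hden, hlt⟩ := exists_quadratic_div_lt (a₂ := 9 * ballMoment r 4)
    (b₂ := ballMoment r 6) (ballMoment_two_pos hr) hcrit
  calc weightedMu1 2 (fun s => s ^ 2) (Metric.ball 0 r)
      ≤ _ := weightedMu1_ball_le hr.le t hden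
    _ < ballMoment r 0 / ballMoment r 2 := hlt
    _ = _ := ballMoment_zero_div_ballMoment_two hr
end
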